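/- arXiv:1302.3043 — 8 statements merged into one kernel-verified Lean document; each statement's English description precedes it below -/
import Mathlib

section
/- Let n ≥ 1, let U be a nonempty set, let f be a bijection of Fin n, and let X ⊆ ^nU. Then S_f(X) ≠ ^nU ∖ X. (Hence every full transposition set algebra satisfies the quasi-equation s_f(x) = −x → 0 = 1; the proof uses a constant sequence q, which satisfies q ∘ f ∈ X iff q ∈ X.) -/
/-- for `n ≥ 1`, a nonempty base `U`, a bijection `f` of `Fin n` and any
`X ⊆ ^nU`, the substituted set `S_f(X) = {q : q ∘ f ∈ X}` is never the complement of `X`. -/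
theorem substitution_ne_complement (n : ℕ) (hn : 1 ≤ n) (U : Type*) [Nonempty U]
    (f : Equiv.Perm (Fin n)) (X : Set (Fin n → U)) :
    {q : Fin n → U | q ∘ f ∈ X} ≠ Set.univ \ X := by
  intro h
  obtain ⟨u⟩ := ‹Nonempty U›
  have hq : (fun _ : Fin n => u) ∘ f = fun _ : Fin n => u := rfl
  have := Set.ext_iff.mp h (fun _ => u)
  simp [hq, Set.mem_setOf_eq] at this
end

section
/- For every n ≥ 2 there exist a nonempty permutable set G ⊆ ^n(Fin n), a bijection f of Fin n, and a subset X ⊆ G such that {q ∈ G : q ∘ f ∈ X} = G ∖ X. (Consequently the quasi-equation s_f(x) = −x → 0 = 1, which holds in every full transposition set algebra, fails in a relativized algebra on a permutable set, so the class RTA_n of representable transposition algebras is not closed under homomorphic images and hence is not a variety.) -/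
/-- for every `n ≥ 2` there are a nonempty permutable set `G ⊆ ^n(Fin n)`,
a bijection `f` of `Fin n`, and a subset `X ⊆ G` such that the relativized substitution
`{q ∈ G : q ∘ f ∈ X}` equals `G \ X`.  (So the quasi-equation `s_f(x) = -x → 0 = 1`,
valid in all full transposition set algebras, fails in a relativized algebra; hence
`RTA_n` is not a variety.) -/
theorem rta_not_closed_under_homomorphic_images (n : ℕ) (hn : 2 ≤ n) :
    ∃ (G : Set (Fin n → Fin n)) (f : Equiv.Perm (Fin n)) (X : Set (Fin n → Fin n)),
      G.Nonempty ∧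
      (∀ i j : Fin n, i ≠ j → ∀ s ∈ G, s ∘ (Equiv.swap i j) ∈ G) ∧
      X ⊆ G ∧
      {q ∈ G | q ∘ f ∈ X} = G \ X := by
  have h01 : (⟨0, by omega⟩ : Fin n) ≠ ⟨1, by omega⟩ := by
    simp [Fin.ext_iff]
  set f : Equiv.Perm (Fin n) := Equiv.swap ⟨0, by omega⟩ ⟨1, by omega⟩ with hf
  have hsf : Equiv.Perm.sign f = -1 := Equiv.Perm.sign_swap h01
  refine ⟨{s | Function.Bijective s}, f,
    {s | ∃ σ : Equiv.Perm (Fin n), Equiv.Perm.sign σ = 1 ∧ ⇑σ = s},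
    ⟨id, Function.bijective_id⟩, ?_, ?_, ?_⟩
  · intro i j hij s hs
    exact hs.comp (Equiv.swap i j).bijective
  · rintro s ⟨σ, _, rfl⟩
    exact σ.bijective
  · ext q
    simp only [Set.mem_setOf_eq, Set.mem_sep_iff, Set.mem_diff]
    constructor
    · rintro ⟨hq, σ, hσ, hσq⟩
      refine ⟨hq, ?_⟩
      rintro ⟨τ, hτ, rfl⟩
      -- τ ∘ f = σ as functions, so σ = τ * f as perms
      have : σ = τ * f := by
        apply Equiv.coe_fn_injective
        exact hσq
      rw [this, map_mul, hτ, hsf] at hσ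
      simp at hσ
    · rintro ⟨hq, hqX⟩
      refine ⟨hq, ?_⟩
      set τ := Equiv.ofBijective q hq with hτ
      have hqτ : ⇑τ = q := rfl
      have hτsign : Equiv.Perm.sign τ = -1 := by
        rcases Int.units_eq_one_or (Equiv.Perm.sign τ) with h | h
        · exact absurd ⟨τ, h, hqτ⟩ hqX
        · exact h
      refine ⟨τ * f, ?_, ?_⟩
      · rw [map_mul, hτsign, hsf]; rfl
      · ext x; simp [hqτ]
end

section
/- (Representation theorem.) Let n ≥ 2 and let A be a transposition algebra of dimension n. Then for every nonzero a ∈ A there is a homomorphism h : A → 𝒫(Perm(Fin n)) with h(a) ≠ ∅; that is, h(x ⊓ y) = h(x) ∩ h(y), h(xᶜ) = Perm(Fin n) ∖ h(x), h(1) = Perm(Fin n), and h(s_{ij}x) = {ξ ∈ Perm(Fin n) : ξ ∘ [i,j] ∈ h(x)} for all i ≠ j < n. (Hence every algebra satisfying Σ_n is a subdirect product of relativized transposition set algebras on permutable sets.) -/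
/-- A transposition algebra with dimensions indexed by `ι`: a Boolean algebra with unary
operations `s i j` (for `i ≠ j`) satisfying the equation set `Σ_n` (the substitutions are
Boolean endomorphisms and obey the relations presenting the symmetric group by its
transpositions). -/
structure TranspositionAlgebra (ι : Type*) (A : Type*) [BooleanAlgebra A] where
  s : ι → ι → A → A
  map_inf : ∀ i j : ι, i ≠ j → ∀ x y : A, s i j (x ⊓ y) = s i j x ⊓ s i j y
  map_compl : ∀ i j : ι, i ≠ j → ∀ x : A, s i j xᶜ = (s i j x)ᶜ
  symm : ∀ i j : ι, i ≠ j → s i j = s j i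
  invol : ∀ i j : ι, i ≠ j → ∀ x : A, s i j (s i j x) = x
  comm : ∀ i j k l : ι, i ≠ j → k ≠ l → i ≠ k → i ≠ l → j ≠ k → j ≠ l →
    ∀ x : A, s i j (s k l x) = s k l (s i j x)
  braid : ∀ i j k : ι, i ≠ j → j ≠ k → i ≠ k →
    ∀ x : A, s i j (s j k (s i j x)) = s i k x

/-!
The equations `Σ_n` say exactly that `p ↦ s_p` satisfies the relations presenting the symmetric
group by its transpositions, so once that presentation is established, `[i,j] ↦ s_{ij}` extends
to a homomorphism `φ` from `Perm(Fin n)` to the order automorphisms of `A`. For the presentation,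
take a word with trivial product in `Perm ι` and push its first letter `(a, x)` to the right:
past each letter it either cancels (and the word gets shorter) or turns into some `(a, y)`,
leaving behind a letter not involving `a`. It cannot reach the end of the word, because a product
of transpositions avoiding `a` followed by `[a, y]` sends `y` to `a`, not to `y`.

Given `φ`, a prime ideal `J` of `A` omitting `a` (Boolean prime ideal theorem) yields the
representation `h x = {ξ | φ ξ x ∉ J}`.
-/

open Equiv

abbrev DistinctPair (ι : Type*) := {p : ι × ι // p.1 ≠ p.2}

namespace DistinctPair

variable {ι : Type*} [DecidableEq ι]

def swap (p : DistinctPair ι) : Perm ι :=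
  Equiv.swap p.1.1 p.1.2

theorem prod_map_swap_apply_of_forall_ne {a : ι} {L : List (DistinctPair ι)}
    (hL : ∀ p ∈ L, p.1.1 ≠ a ∧ p.1.2 ≠ a) : (L.map swap).prod a = a := by
  induction L with
  | nil => rfl
  | cons p L ih =>
    simp only [List.forall_mem_cons] at hL
    rw [List.map_cons, List.prod_cons, Perm.mul_apply, ih hL.2, swap,
      swap_apply_of_ne_of_ne hL.1.1.symm hL.1.2.symm]

theorem exists_prod_map_swap_eq [Finite ι] (σ : Perm ι) :
    ∃ L : List (DistinctPair ι), (L.map swap).prod = σ := by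
  induction σ using Perm.swap_induction_on with
  | one => exact ⟨[], rfl⟩
  | swap_mul σ x y hxy ih =>
    obtain ⟨L, rfl⟩ := ih
    exact ⟨⟨(x, y), hxy⟩ :: L, rfl⟩

end DistinctPair

structure TranspositionRelations {ι G : Type*} [Group G] (t : DistinctPair ι → G) : Prop where
  mul_self : ∀ p, t p * t p = 1
  symm : ∀ {i j : ι} (hij : i ≠ j), t ⟨(i, j), hij⟩ = t ⟨(j, i), hij.symm⟩
  comm : ∀ {i j k l : ι} (hij : i ≠ j) (hkl : k ≠ l), i ≠ k → i ≠ l → j ≠ k → j ≠ l →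
    t ⟨(i, j), hij⟩ * t ⟨(k, l), hkl⟩ = t ⟨(k, l), hkl⟩ * t ⟨(i, j), hij⟩
  braid : ∀ {i j k : ι} (hij : i ≠ j) (hjk : j ≠ k) (hik : i ≠ k),
    t ⟨(i, j), hij⟩ * t ⟨(j, k), hjk⟩ * t ⟨(i, j), hij⟩ = t ⟨(i, k), hik⟩

namespace TranspositionRelations

variable {ι G : Type*} [Group G] {t : DistinctPair ι → G}

theorem inv_eq (ht : TranspositionRelations t) (p : DistinctPair ι) : (t p)⁻¹ = t p :=
  inv_eq_of_mul_eq_one_right (ht.mul_self p)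

theorem braid' (ht : TranspositionRelations t) {i j k : ι} (hij : i ≠ j) (hjk : j ≠ k)
    (hik : i ≠ k) : t ⟨(i, j), hij⟩ * t ⟨(j, k), hjk⟩ = t ⟨(i, k), hik⟩ * t ⟨(i, j), hij⟩ := by
  rw [← ht.braid hij hjk hik, mul_assoc _ (t _), ht.mul_self, mul_one]

theorem mul_eq_one_or_exists_mul_eq (ht : TranspositionRelations t) {a x : ι} (hax : a ≠ x)
    (q : DistinctPair ι) :
    t ⟨(a, x), hax⟩ * t q = 1 ∨
    ∃ (q' : DistinctPair ι) (y : ι) (hay : a ≠ y), q'.1.1 ≠ a ∧ q'.1.2 ≠ a ∧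
      t ⟨(a, x), hax⟩ * t q = t q' * t ⟨(a, y), hay⟩ := by
  have through_a : ∀ e (hae : a ≠ e), t ⟨(a, x), hax⟩ * t ⟨(a, e), hae⟩ = 1 ∨
      ∃ (q' : DistinctPair ι) (y : ι) (hay : a ≠ y), q'.1.1 ≠ a ∧ q'.1.2 ≠ a ∧
        t ⟨(a, x), hax⟩ * t ⟨(a, e), hae⟩ = t q' * t ⟨(a, y), hay⟩ := by
    intro e hae
    obtain rfl | hxe := eq_or_ne x e
    · exact .inl (ht.mul_self _)
    · refine .inr ⟨⟨(x, e), hxe⟩, x, hax, hax.symm, hae.symm, ?_⟩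
      rw [ht.symm hax]
      exact ht.braid' hax.symm hae hxe
  have through_x : ∀ e (hxe : x ≠ e) (hae : a ≠ e),
      t ⟨(a, x), hax⟩ * t ⟨(x, e), hxe⟩ = t ⟨(x, e), hxe⟩ * t ⟨(a, e), hae⟩ := by
    intro e hxe hae
    rw [ht.symm hax, ht.symm hae]
    exact (ht.braid' hxe hae.symm hax.symm).symm
  obtain ⟨⟨c, d⟩, hcd⟩ := q
  rcases eq_or_ne c a with rfl | hca
  · exact through_a d hcd
  rcases eq_or_ne d a with rfl | hda
  · rw [ht.symm hcd]
    exact through_a c hcd.symm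
  refine .inr ?_
  rcases eq_or_ne c x with rfl | hcx
  · exact ⟨_, d, hda.symm, hca, hda, through_x d hcd hda.symm⟩
  rcases eq_or_ne d x with rfl | hdx
  · rw [ht.symm hcd]
    exact ⟨_, c, hca.symm, hda, hca, through_x c hcd.symm hca.symm⟩
  exact ⟨_, x, hax, hca, hda, ht.comm hax hcd hca.symm hda.symm hcx.symm hdx.symm⟩

theorem exists_push (ht : TranspositionRelations t) {a : ι} (L : List (DistinctPair ι))
    {x : ι} (hax : a ≠ x) :
    (∃ M : List (DistinctPair ι), M.length < L.length ∧
      t ⟨(a, x), hax⟩ * (L.map t).prod = (M.map t).prod) ∨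
    ∃ (M : List (DistinctPair ι)) (y : ι) (hay : a ≠ y), (∀ p ∈ M, p.1.1 ≠ a ∧ p.1.2 ≠ a) ∧
      t ⟨(a, x), hax⟩ * (L.map t).prod = (M.map t).prod * t ⟨(a, y), hay⟩ := by
  induction L generalizing x with
  | nil => exact .inr ⟨[], x, hax, by simp, by simp⟩
  | cons q L ih =>
    rw [List.map_cons, List.prod_cons, ← mul_assoc]
    rcases ht.mul_eq_one_or_exists_mul_eq hax q with hq | ⟨q', y, hay, hq'₁, hq'₂, hq⟩
    · exact .inl ⟨L, by simp, by rw [hq, one_mul]⟩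
    rw [hq, mul_assoc]
    rcases ih hay with ⟨M, hM, hML⟩ | ⟨M, z, haz, hMa, hML⟩
    · exact .inl ⟨q' :: M, by simpa using hM, by rw [hML, List.map_cons, List.prod_cons]⟩
    · refine .inr ⟨q' :: M, z, haz, ?_, ?_⟩
      · simpa [hq'₁, hq'₂] using hMa
      · rw [hML, List.map_cons, List.prod_cons, mul_assoc]

theorem prodMk {G' : Type*} [Group G'] {t' : DistinctPair ι → G'} (ht : TranspositionRelations t)
    (ht' : TranspositionRelations t') : TranspositionRelations fun p => (t p, t' p) where
  mul_self p := Prod.ext (ht.mul_self p) (ht'.mul_self p)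
  symm hij := Prod.ext (ht.symm hij) (ht'.symm hij)
  comm hij hkl hik hil hjk hjl :=
    Prod.ext (ht.comm hij hkl hik hil hjk hjl) (ht'.comm hij hkl hik hil hjk hjl)
  braid hij hjk hik := Prod.ext (ht.braid hij hjk hik) (ht'.braid hij hjk hik)

theorem prod_map_reverse (ht : TranspositionRelations t) (L : List (DistinctPair ι)) :
    (L.reverse.map t).prod = (L.map t).prod⁻¹ := by
  rw [List.prod_inv_reverse, List.map_map, List.map_reverse]
  congr 3
  exact funext fun p => (ht.inv_eq p).symm

variable [DecidableEq ι]

theorem swap : TranspositionRelations (DistinctPair.swap (ι := ι)) where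
  mul_self _ := swap_mul_self _ _
  symm _ := swap_comm _ _
  comm hij hkl hik hil hjk hjl :=
    (Perm.disjoint_swap_swap (by simp [*])).commute.eq
  braid {i j k} hij hjk hik := by
    simpa only [DistinctPair.swap, swap_comm j i, swap_comm k j] using
      swap_mul_swap_mul_swap hjk.symm hik.symm

/-- Pushing is done in `Perm ι × G`, so that one rewriting of the word is valid in both. -/
theorem prod_map_eq_one (ht : TranspositionRelations t) :
    ∀ {L : List (DistinctPair ι)}, (L.map DistinctPair.swap).prod = 1 → (L.map t).prod = 1
  | [], _ => rfl
  | ⟨⟨a, x⟩, hax⟩ :: L, hL => by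
    have fst_prod (M : List (DistinctPair ι)) :
        (M.map fun p => (DistinctPair.swap p, t p)).prod.1 = (M.map DistinctPair.swap).prod := by
      rw [← MonoidHom.coe_fst, map_list_prod, List.map_map]; rfl
    have snd_prod (M : List (DistinctPair ι)) :
        (M.map fun p => (DistinctPair.swap p, t p)).prod.2 = (M.map t).prod := by
      rw [← MonoidHom.coe_snd, map_list_prod, List.map_map]; rfl
    rw [List.map_cons, List.prod_cons] at hL ⊢
    rcases (swap.prodMk ht).exists_push L hax with ⟨M, hM, hLM⟩ | ⟨M, y, hay, hMa, hLM⟩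
    · have h₁ := congrArg Prod.fst hLM
      have h₂ := congrArg Prod.snd hLM
      simp only [Prod.fst_mul, Prod.snd_mul, fst_prod, snd_prod] at h₁ h₂
      rw [h₂]
      exact ht.prod_map_eq_one (h₁ ▸ hL)
    · have h₁ := congrArg Prod.fst hLM
      simp only [Prod.fst_mul, fst_prod] at h₁
      have hy := congrArg (· y) (hL.symm.trans h₁)
      simp only [Perm.one_apply, Perm.mul_apply, DistinctPair.swap, swap_apply_right,
        DistinctPair.prod_map_swap_apply_of_forall_ne hMa] at hy
      exact absurd hy.symm hay
termination_by L => L.length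
decreasing_by simp only [List.length_cons]; omega

theorem prod_map_eq_prod_map (ht : TranspositionRelations t) {L L' : List (DistinctPair ι)}
    (h : (L.map DistinctPair.swap).prod = (L'.map DistinctPair.swap).prod) :
    (L.map t).prod = (L'.map t).prod := by
  have h₁ : ((L ++ L'.reverse).map DistinctPair.swap).prod = 1 := by
    rw [List.map_append, List.prod_append, swap.prod_map_reverse, h, mul_inv_cancel]
  have h₂ := ht.prod_map_eq_one h₁
  rwa [List.map_append, List.prod_append, ht.prod_map_reverse, mul_inv_eq_one] at h₂

variable [Finite ι]

noncomputable def lift (ht : TranspositionRelations t) : Perm ι →* G where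
  toFun σ := ((DistinctPair.exists_prod_map_swap_eq σ).choose.map t).prod
  map_one' :=
    ht.prod_map_eq_prod_map (L' := []) (DistinctPair.exists_prod_map_swap_eq 1).choose_spec
  map_mul' σ τ := by
    rw [← List.prod_append, ← List.map_append]
    refine ht.prod_map_eq_prod_map ?_
    simp only [List.map_append, List.prod_append,
      (DistinctPair.exists_prod_map_swap_eq _).choose_spec]

theorem lift_prod_map_swap (ht : TranspositionRelations t) (L : List (DistinctPair ι)) :
    ht.lift (L.map DistinctPair.swap).prod = (L.map t).prod :=
  ht.prod_map_eq_prod_map (DistinctPair.exists_prod_map_swap_eq _).choose_spec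

theorem lift_swap (ht : TranspositionRelations t) {i j : ι} (hij : i ≠ j) :
    ht.lift (Equiv.swap i j) = t ⟨(i, j), hij⟩ := by
  simpa [DistinctPair.swap] using ht.lift_prod_map_swap [⟨(i, j), hij⟩]

end TranspositionRelations

theorem BooleanAlgebra.exists_boundedLatticeHom_prop {A : Type*} [BooleanAlgebra A] {a : A}
    (ha : a ≠ ⊥) : ∃ f : BoundedLatticeHom A Prop, f a := by
  have hdisj : Disjoint (Order.PFilter.principal a : Set A)
      (Order.Ideal.principal (⊥ : A) : Set A) :=
    Set.disjoint_left.mpr fun x hax hx => ha <| le_bot_iff.mp <|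
      (Order.PFilter.mem_principal.mp hax).trans (Order.Ideal.mem_principal.mp hx)
  obtain ⟨J, hJ, -, hJa⟩ := DistribLattice.prime_ideal_of_disjoint_filter_ideal hdisj
  have haJ : a ∉ J := Set.disjoint_left.mp hJa (Order.PFilter.mem_principal.mpr le_rfl)
  refine ⟨⟨⟨⟨fun x => x ∉ J, fun x y => ?_⟩, fun x y => ?_⟩, ?_, ?_⟩, haJ⟩
  · exact propext <| (not_congr Order.Ideal.sup_mem_iff).trans not_and_or
  · exact propext ⟨fun h => ⟨fun hx => h (J.lower inf_le_left hx),
      fun hy => h (J.lower inf_le_right hy)⟩, fun ⟨hx, hy⟩ h => (hJ.mem_or_mem h).elim hx hy⟩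
  · exact eq_true hJ.toIsProper.top_notMem
  · exact eq_false (not_not_intro J.bot_mem)

namespace TranspositionAlgebra

variable {ι A : Type*} [BooleanAlgebra A] (M : TranspositionAlgebra ι A)

theorem monotone_s {i j : ι} (hij : i ≠ j) : Monotone (M.s i j) := fun x y hxy => by
  rw [← inf_eq_left] at hxy ⊢
  rw [← M.map_inf i j hij, hxy]

def sOrderIso (p : DistinctPair ι) : A ≃o A :=
  (Function.Involutive.toPerm _ (M.invol _ _ p.2)).toOrderIso (M.monotone_s p.2)
    (M.monotone_s p.2)

@[simp]
theorem sOrderIso_apply (p : DistinctPair ι) (x : A) : M.sOrderIso p x = M.s p.1.1 p.1.2 x :=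
  rfl

theorem transpositionRelations_sOrderIso : TranspositionRelations M.sOrderIso where
  mul_self p := RelIso.ext fun x => M.invol _ _ p.2 x
  symm hij := RelIso.ext fun x => congrFun (M.symm _ _ hij) x
  comm hij hkl hik hil hjk hjl := RelIso.ext fun x => M.comm _ _ _ _ hij hkl hik hil hjk hjl x
  braid hij hjk hik := RelIso.ext fun x => M.braid _ _ _ hij hjk hik x

end TranspositionAlgebra

theorem transpositionAlgebra_representation_general (n : ℕ)
    {A : Type*} [BooleanAlgebra A] (M : TranspositionAlgebra (Fin n) A)
    (a : A) (ha : a ≠ ⊥) :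
    ∃ h : A → Set (Equiv.Perm (Fin n)),
      h a ≠ ∅ ∧
      (∀ x y : A, h (x ⊓ y) = h x ∩ h y) ∧
      (∀ x : A, h xᶜ = Set.univ \ h x) ∧
      h ⊤ = Set.univ ∧
      (∀ i j : Fin n, i ≠ j → ∀ x : A,
        h (M.s i j x) = {ξ : Equiv.Perm (Fin n) | ξ * Equiv.swap i j ∈ h x}) := by
  obtain ⟨f, hfa⟩ := BooleanAlgebra.exists_boundedLatticeHom_prop ha
  let φ := M.transpositionRelations_sOrderIso.lift
  refine ⟨fun x => {ξ | f (φ ξ x)}, ?_, ?_, ?_, ?_, ?_⟩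
  · exact Set.nonempty_iff_ne_empty.mp ⟨1, by simpa [φ] using hfa⟩
  · intro x y; ext ξ; simp [map_inf]
  · intro x; ext ξ; simp
  · ext ξ; simp
  · intro i j hij x
    ext ξ
    simp [φ, RelIso.mul_apply, TranspositionRelations.lift_swap _ hij]

/-- representation theorem: for `n ≥ 2`, every nonzero element `a` of a
transposition algebra of dimension `n` is not annihilated by some homomorphism into the
full transposition set algebra `𝒫(Perm(Fin n))` (relativized to the permutable set of all
permutations of `n`). -/
theorem transpositionAlgebra_representation (n : ℕ) (hn : 2 ≤ n)
    {A : Type*} [BooleanAlgebra A] (M : TranspositionAlgebra (Fin n) A)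
    (a : A) (ha : a ≠ ⊥) :
    ∃ h : A → Set (Equiv.Perm (Fin n)),
      h a ≠ ∅ ∧
      (∀ x y : A, h (x ⊓ y) = h x ∩ h y) ∧
      (∀ x : A, h xᶜ = Set.univ \ h x) ∧
      h ⊤ = Set.univ ∧
      (∀ i j : Fin n, i ≠ j → ∀ x : A,
        h (M.s i j x) = {ξ : Equiv.Perm (Fin n) | ξ * Equiv.swap i j ∈ h x}) :=
  transpositionAlgebra_representation_general n M a ha
end

section
/- Let n ≥ 2, let A be a countable transposition algebra of dimension n, and let X ⊆ A be such that 0 is the greatest lower bound of X. Then there exist a set W, a permutable set V ⊆ ^nW, and an injective homomorphism f : A → 𝒫(V) (preserving ⊓ as ∩, complement relative to V, 1 as V, and with f(s_{ij}x) = {q ∈ V : q ∘ [i,j] ∈ f(x)}) such that ⋂_{x ∈ X} f(x) = ∅. -/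
open Equiv Equiv.Perm

section PermLift
variable {n : ℕ}

private theorem TA_P1 (b : Fin n) (τ : Perm (Fin n)) :
    swap (0 : Fin (n+1)) b.succ * decomposeFin.symm (0, τ) = decomposeFin.symm (b.succ, τ) := by
  refine Equiv.ext fun x => Fin.cases ?_ (fun k => ?_) x <;>
    simp [Perm.mul_apply, Equiv.Perm.decomposeFin_symm_apply_zero, Equiv.swap_self]

private theorem TA_P2 (b : Fin n) (τ : Perm (Fin n)) :
    swap (0 : Fin (n+1)) b.succ * decomposeFin.symm (b.succ, τ) = decomposeFin.symm (0, τ) := by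
  refine Equiv.ext fun x => Fin.cases ?_ (fun k => ?_) x <;>
    simp [Perm.mul_apply, Equiv.Perm.decomposeFin_symm_apply_zero, Equiv.swap_self,
      Equiv.swap_apply_self]

private theorem TA_P3 (a b : Fin n) (hab : a ≠ b) (τ : Perm (Fin n)) :
    swap (0 : Fin (n+1)) b.succ * decomposeFin.symm (a.succ, τ) =
      decomposeFin.symm (a.succ, swap a b * τ) := by
  refine Equiv.ext fun x => Fin.cases ?_ (fun k => ?_) x
  · simp [Perm.mul_apply, Equiv.Perm.decomposeFin_symm_apply_zero, swap_apply_def,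
      Fin.succ_ne_zero, Fin.succ_inj, hab]
  · simp only [Perm.mul_apply, Equiv.Perm.decomposeFin_symm_apply_succ]
    rcases eq_or_ne (τ k) a with h | h <;> rcases eq_or_ne (τ k) b with h2 | h2 <;>
      simp [swap_apply_def, h, h2, Fin.succ_ne_zero, Fin.succ_inj, hab, hab.symm,
        Ne.symm, (Fin.succ_ne_zero _).symm]

private theorem TA_P4 (a b : Fin n) (p : Fin (n+1)) (hab : a ≠ b) (hpa : p ≠ a.succ)
    (hpb : p ≠ b.succ) (τ : Perm (Fin n)) :
    swap a.succ b.succ * decomposeFin.symm (p, τ) = decomposeFin.symm (p, swap a b * τ) := by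
  refine Equiv.ext fun x => Fin.cases ?_ (fun k => ?_) x
  · simp [Perm.mul_apply, Equiv.Perm.decomposeFin_symm_apply_zero, swap_apply_def, hpa, hpb]
  · simp only [Perm.mul_apply, Equiv.Perm.decomposeFin_symm_apply_succ]
    rcases eq_or_ne (τ k) a with h | h <;> rcases eq_or_ne (τ k) b with h2 | h2 <;>
      rcases eq_or_ne ((τ k).succ) p with h3 | h3 <;>
      simp [swap_apply_def, h, h2, h3, Fin.succ_ne_zero, Fin.succ_inj, hab, hab.symm,
        hpa, hpb, Ne.symm hpa, Ne.symm hpb, (Fin.succ_ne_zero a).symm, (Fin.succ_ne_zero b).symm]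

private theorem TA_P5 (a b : Fin n) (hab : a ≠ b) (τ : Perm (Fin n)) :
    swap a.succ b.succ * decomposeFin.symm (a.succ, τ) =
      decomposeFin.symm (b.succ, swap a b * τ) := by
  refine Equiv.ext fun x => Fin.cases ?_ (fun k => ?_) x
  · simp [Perm.mul_apply, Equiv.Perm.decomposeFin_symm_apply_zero, swap_apply_def]
  · simp only [Perm.mul_apply, Equiv.Perm.decomposeFin_symm_apply_succ]
    rcases eq_or_ne (τ k) a with h | h <;> rcases eq_or_ne (τ k) b with h2 | h2 <;>
      simp [swap_apply_def, h, h2, Fin.succ_ne_zero, Fin.succ_inj, hab, hab.symm,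
        (Fin.succ_ne_zero a).symm, (Fin.succ_ne_zero b).symm]

end PermLift

/-- The transpositions together with the Coxeter-type relations present the symmetric group:
any system of elements of a group indexed by pairs of distinct indices satisfying the
relations extends to a homomorphism from `Equiv.Perm (Fin m)`. -/
theorem TA_exists_perm_hom (m : ℕ) {G : Type*} [Group G] (e : Fin m → Fin m → G)
    (hsymm : ∀ i j, i ≠ j → e i j = e j i)
    (hinv : ∀ i j, i ≠ j → e i j * e i j = 1)
    (hcomm : ∀ i j k l, i ≠ j → k ≠ l → i ≠ k → i ≠ l → j ≠ k → j ≠ l →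
      e i j * e k l = e k l * e i j)
    (hbraid : ∀ i j k, i ≠ j → j ≠ k → i ≠ k → e i j * e j k * e i j = e i k) :
    ∃ φ : Equiv.Perm (Fin m) →* G, ∀ i j, i ≠ j → φ (Equiv.swap i j) = e i j := by
  classical
  have braid' : ∀ i j k, i ≠ j → j ≠ k → i ≠ k → e i j * e j k = e i k * e i j := by
    intro i j k hij hjk hik
    calc e i j * e j k = e i j * e j k * (e i j * e i j) := by rw [hinv i j hij, mul_one]
      _ = (e i j * e j k * e i j) * e i j := by group
      _ = e i k * e i j := by rw [hbraid i j k hij hjk hik]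
  clear hbraid
  induction m with
  | zero =>
    exact ⟨1, fun i _ _ => i.elim0⟩
  | succ n IH =>
    have hs := Fin.succ_injective n
    obtain ⟨ψ, hψ⟩ := IH (fun a b => e a.succ b.succ)
      (fun i j h => hsymm _ _ (hs.ne h))
      (fun i j h => hinv _ _ (hs.ne h))
      (fun i j k l h1 h2 h3 h4 h5 h6 => hcomm _ _ _ _
        (hs.ne h1) (hs.ne h2) (hs.ne h3) (hs.ne h4) (hs.ne h5) (hs.ne h6))
      (fun i j k h1 h2 h3 => braid' _ _ _ (hs.ne h1) (hs.ne h2) (hs.ne h3))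
    set c : Fin (n+1) → G := fun p => if p = 0 then 1 else e 0 p with hc
    set Φ : Perm (Fin (n+1)) → G := fun σ =>
      c ((decomposeFin σ).1) * ψ ((decomposeFin σ).2) with hΦ
    have base : ∀ (p : Fin (n+1)) (τ : Perm (Fin n)),
        Φ (decomposeFin.symm (p, τ)) = c p * ψ τ := by
      intro p τ; rw [hΦ]; simp
    have c0 : c 0 = 1 := by rw [hc]; simp
    have cS : ∀ b : Fin n, c b.succ = e 0 b.succ := by
      intro b; rw [hc]; simp [Fin.succ_ne_zero]
    have keyB : ∀ (b : Fin n) (p : Fin (n+1)) (τ : Perm (Fin n)),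
        Φ (swap 0 b.succ * decomposeFin.symm (p, τ)) =
          e 0 b.succ * Φ (decomposeFin.symm (p, τ)) := by
      intro b p τ
      rcases Fin.eq_zero_or_eq_succ p with rfl | ⟨a, rfl⟩
      · rw [TA_P1, base, base, c0, cS, one_mul]
      · rcases eq_or_ne a b with rfl | hab
        · rw [TA_P2, base, base, c0, cS, one_mul, ← mul_assoc,
            hinv _ _ (Ne.symm (Fin.succ_ne_zero a)), one_mul]
        · rw [TA_P3 a b hab, base, base, map_mul, hψ a b hab, cS, ← mul_assoc, ← mul_assoc,
            braid' 0 a.succ b.succ (Ne.symm (Fin.succ_ne_zero a)) (hs.ne hab)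
              (Ne.symm (Fin.succ_ne_zero b))]
    have keyA : ∀ (a b : Fin n), a ≠ b → ∀ (p : Fin (n+1)) (τ : Perm (Fin n)),
        Φ (swap a.succ b.succ * decomposeFin.symm (p, τ)) =
          e a.succ b.succ * Φ (decomposeFin.symm (p, τ)) := by
      intro a b hab p τ
      have hab' : a.succ ≠ b.succ := hs.ne hab
      have h0a : (0 : Fin (n+1)) ≠ a.succ := Ne.symm (Fin.succ_ne_zero a)
      have h0b : (0 : Fin (n+1)) ≠ b.succ := Ne.symm (Fin.succ_ne_zero b)
      have H1 : e a.succ b.succ * e 0 a.succ = e 0 b.succ * e a.succ b.succ := by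
        have := braid' b.succ a.succ 0 hab'.symm (Fin.succ_ne_zero a) (Fin.succ_ne_zero b)
        rwa [hsymm b.succ a.succ hab'.symm, hsymm a.succ 0 (Fin.succ_ne_zero a),
          hsymm b.succ 0 (Fin.succ_ne_zero b)] at this
      by_cases hpa : p = a.succ
      · subst hpa
        rw [TA_P5 a b hab, base, base, map_mul, hψ a b hab, cS, cS, ← mul_assoc, ← mul_assoc, H1]
      · by_cases hpb : p = b.succ
        · subst hpb
          have H2 : e 0 a.succ * e a.succ b.succ = e a.succ b.succ * e 0 b.succ := by
            calc e 0 a.succ * e a.succ b.succ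
                = (e a.succ b.succ * e a.succ b.succ) * (e 0 a.succ * e a.succ b.succ) := by
                  rw [hinv _ _ hab', one_mul]
              _ = e a.succ b.succ * (e a.succ b.succ * e 0 a.succ) * e a.succ b.succ := by group
              _ = e a.succ b.succ * (e 0 b.succ * e a.succ b.succ) * e a.succ b.succ := by
                  rw [H1]
              _ = e a.succ b.succ * e 0 b.succ * (e a.succ b.succ * e a.succ b.succ) := by group
              _ = e a.succ b.succ * e 0 b.succ := by rw [hinv _ _ hab', mul_one]
          rw [swap_comm, TA_P5 b a hab.symm, base, base, map_mul, hψ b a hab.symm, cS, cS,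
            ← mul_assoc, ← mul_assoc, hsymm b.succ a.succ hab'.symm, H2]
        · rw [TA_P4 a b p hab hpa hpb, base, base, map_mul, hψ a b hab, ← mul_assoc, ← mul_assoc]
          congr 1
          rcases Fin.eq_zero_or_eq_succ p with rfl | ⟨q, rfl⟩
          · rw [c0, one_mul, mul_one]
          · rw [cS]
            exact hcomm 0 q.succ a.succ b.succ (Ne.symm (Fin.succ_ne_zero q)) hab'
              h0a h0b hpa hpb
    have key : ∀ (i j : Fin (n+1)), i ≠ j → ∀ σ : Perm (Fin (n+1)),
        Φ (swap i j * σ) = e i j * Φ σ := by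
      intro i j hij σ
      obtain ⟨⟨p, τ⟩, rfl⟩ := decomposeFin.symm.surjective σ
      rcases Fin.eq_zero_or_eq_succ i with rfl | ⟨a, rfl⟩
      · rcases Fin.eq_zero_or_eq_succ j with rfl | ⟨b, rfl⟩
        · exact absurd rfl hij
        · exact keyB b p τ
      · rcases Fin.eq_zero_or_eq_succ j with rfl | ⟨b, rfl⟩
        · rw [swap_comm, hsymm _ _ hij]
          exact keyB a p τ
        · exact keyA a b (fun h => hij (by rw [h])) p τ
    have Φ1 : Φ 1 = 1 := by
      have h1 : (1 : Perm (Fin (n+1))) = decomposeFin.symm (0, 1) := by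
        rw [Equiv.Perm.decomposeFin_symm_of_one, Equiv.swap_self]
        rfl
      rw [h1, base, c0, map_one, one_mul]
    have hmul : ∀ σ ρ : Perm (Fin (n+1)), Φ (σ * ρ) = Φ σ * Φ ρ := by
      intro σ
      refine Equiv.Perm.swap_induction_on σ ?_ ?_
      · intro ρ; rw [one_mul, Φ1, one_mul]
      · intro f x y hxy ih ρ
        calc Φ (swap x y * f * ρ) = Φ (swap x y * (f * ρ)) := by rw [mul_assoc]
          _ = e x y * Φ (f * ρ) := key x y hxy _
          _ = e x y * (Φ f * Φ ρ) := by rw [ih]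
          _ = (e x y * Φ f) * Φ ρ := (mul_assoc _ _ _).symm
          _ = Φ (swap x y * f) * Φ ρ := by rw [key x y hxy]
    refine ⟨MonoidHom.mk' Φ hmul, ?_⟩
    intro i j hij
    show Φ (swap i j) = e i j
    rw [← mul_one (swap i j), key i j hij, Φ1, mul_one]

/-- a countable transposition algebra of dimension `n ≥ 2` has a representation
(an injective homomorphism onto a subalgebra of `𝒫(V)` for a permutable `V ⊆ ^nW`) omitting
any single set `X` whose greatest lower bound is `0`. -/
theorem transpositionAlgebra_embedding_omitting_type (n : ℕ) (hn : 2 ≤ n)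
    {A : Type*} [BooleanAlgebra A] [Countable A] (M : TranspositionAlgebra (Fin n) A)
    (X : Set A) (hX : IsGLB X ⊥) :
    ∃ (W : Type) (V : Set (Fin n → W)) (f : A → Set (Fin n → W)),
      (∀ i j : Fin n, i ≠ j → ∀ q ∈ V, q ∘ (Equiv.swap i j) ∈ V) ∧
      (∀ x : A, f x ⊆ V) ∧
      Function.Injective f ∧
      (∀ x y : A, f (x ⊓ y) = f x ∩ f y) ∧
      (∀ x : A, f xᶜ = V \ f x) ∧
      f ⊤ = V ∧
      (∀ i j : Fin n, i ≠ j → ∀ x : A,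
        f (M.s i j x) = {q ∈ V | q ∘ (Equiv.swap i j) ∈ f x}) ∧
      (⋂ x ∈ X, f x) = ∅ := by
  classical
  rcases subsingleton_or_nontrivial A with hA | hA
  · -- trivial algebra : use the empty carrier
    haveI : IsEmpty (Fin n → Empty) := ⟨fun q => (q ⟨0, by omega⟩).elim⟩
    refine ⟨Empty, ∅, fun _ => ∅, ?_, ?_, ?_, ?_, ?_, ?_, ?_, ?_⟩
    · intro _ _ _ q hq; exact absurd hq (Set.notMem_empty q)
    · intro _; exact Set.empty_subset _
    · intro a b _; exact Subsingleton.elim a b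
    · intro _ _; simp
    · intro _; simp
    · rfl
    · intro _ _ _ _; ext q; simp
    · exact Set.eq_empty_of_isEmpty _
  -- nontrivial case
  · -- the s_{ij} as permutations of A
    set E : Fin n → Fin n → Equiv.Perm A := fun i j =>
      if h : i ≠ j then
        { toFun := M.s i j, invFun := M.s i j,
          left_inv := fun x => M.invol i j h x, right_inv := fun x => M.invol i j h x }
      else 1 with hE
    have Eapp : ∀ i j, i ≠ j → ∀ x, E i j x = M.s i j x := by
      intro i j h x; rw [hE]; simp [dif_pos h]
    obtain ⟨φ, hφ⟩ := TA_exists_perm_hom n E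
      (by
        intro i j h; ext x
        rw [Eapp i j h, Eapp j i h.symm, M.symm i j h])
      (by
        intro i j h; ext x
        simp only [Perm.mul_apply, Perm.one_apply]
        rw [Eapp i j h, Eapp i j h, M.invol i j h])
      (by
        intro i j k l h1 h2 h3 h4 h5 h6; ext x
        simp only [Perm.mul_apply]
        rw [Eapp k l h2, Eapp i j h1, Eapp i j h1, Eapp k l h2, M.comm i j k l h1 h2 h3 h4 h5 h6])
      (by
        intro i j k h1 h2 h3; ext x
        simp only [Perm.mul_apply]
        rw [Eapp i j h1, Eapp j k h2, Eapp i j h1, Eapp i k h3, M.braid i j k h1 h2 h3])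
    -- basic properties of the action
    have Skey : ∀ (σ : Perm (Fin n)) (i j : Fin n), i ≠ j → ∀ x : A,
        φ (σ * Equiv.swap i j) x = φ σ (M.s i j x) := by
      intro σ i j h x
      rw [map_mul, Perm.mul_apply, hφ i j h, Eapp i j h]
    have Shom : ∀ σ : Perm (Fin n),
        (∀ x y : A, φ σ (x ⊓ y) = φ σ x ⊓ φ σ y) ∧ (∀ x : A, φ σ xᶜ = (φ σ x)ᶜ) := by
      intro σ
      refine Equiv.Perm.swap_induction_on' σ ?_ ?_
      · constructor <;> intros <;> simp
      · intro f i j hij ⟨ih1, ih2⟩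
        constructor
        · intro x y
          rw [Skey f i j hij, Skey f i j hij, Skey f i j hij, M.map_inf i j hij, ih1]
        · intro x
          rw [Skey f i j hij, Skey f i j hij, M.map_compl i j hij, ih2]
    have Sbot : ∀ σ : Perm (Fin n), φ σ ⊥ = ⊥ := by
      intro σ
      have h := (Shom σ).1 ⊥ ⊥ᶜ
      rw [inf_compl_eq_bot] at h
      rw [h, (Shom σ).2, inf_compl_eq_bot]
    have Stop : ∀ σ : Perm (Fin n), φ σ ⊤ = ⊤ := by
      intro σ
      have h2 := (Shom σ).2 ⊥
      rw [← compl_bot, h2, Sbot]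
    have Smono : ∀ (σ : Perm (Fin n)) (x y : A), x ≤ y → φ σ x ≤ φ σ y := by
      intro σ x y h
      have : φ σ (x ⊓ y) = φ σ x := by rw [inf_eq_left.mpr h]
      rw [(Shom σ).1] at this
      exact inf_eq_left.mp this
    have Sinv : ∀ (σ : Perm (Fin n)) (x : A), φ σ⁻¹ (φ σ x) = x := by
      intro σ x
      have : φ (σ⁻¹ * σ) x = φ σ⁻¹ (φ σ x) := by rw [map_mul, Perm.mul_apply]
      rw [inv_mul_cancel, map_one] at this
      exact this.symm ▸ rfl
    -- for every σ and nonzero b there is x ∈ X not above b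
    have hmeet : ∀ (σ : Perm (Fin n)) (b : A), b ≠ ⊥ → ∃ x ∈ X, ¬ b ≤ φ σ x := by
      intro σ b hb
      by_contra hcon
      push_neg at hcon
      have hlb : φ σ⁻¹ b ∈ lowerBounds X := by
        intro x hx
        have := Smono σ⁻¹ _ _ (hcon x hx)
        rwa [Sinv] at this
      have : φ σ⁻¹ b ≤ ⊥ := hX.2 hlb
      have hbeq : φ σ⁻¹ b = ⊥ := le_bot_iff.mp this
      have : b = ⊥ := by
        have := congrArg (φ (σ⁻¹)⁻¹) hbeq
        rwa [Sinv, inv_inv, Sbot] at this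
      exact hb this
    -- existence of ultrafilters
    have uf : ∀ b : A, b ≠ ⊥ → ∃ F : Set A, b ∈ F ∧ ⊥ ∉ F ∧
        (∀ x y : A, x ∈ F → x ≤ y → y ∈ F) ∧ (∀ x y : A, x ∈ F → y ∈ F → x ⊓ y ∈ F) ∧
        (∀ x : A, x ∈ F ∨ xᶜ ∈ F) := by
      intro b hb
      set S : Set (Set A) := {F | b ∈ F ∧ ⊥ ∉ F ∧
        (∀ x y : A, x ∈ F → x ≤ y → y ∈ F) ∧ (∀ x y : A, x ∈ F → y ∈ F → x ⊓ y ∈ F)} with hS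
      have hbase : {x : A | b ≤ x} ∈ S := by
        refine ⟨le_refl b, fun h => hb (le_bot_iff.mp h), ?_, ?_⟩
        · intro x y hx hxy; exact le_trans hx hxy
        · intro x y hx hy; exact le_inf hx hy
      have hzorn : ∀ c ⊆ S, IsChain (· ⊆ ·) c → c.Nonempty →
          ∃ ub ∈ S, ∀ s ∈ c, s ⊆ ub := by
        intro c hcS hchain hcne
        obtain ⟨F0, hF0⟩ := hcne
        refine ⟨⋃₀ c, ⟨⟨F0, hF0, (hcS hF0).1⟩, ?_, ?_, ?_⟩, fun s hs => Set.subset_sUnion_of_mem hs⟩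
        · rintro ⟨F, hF, hbot⟩; exact (hcS hF).2.1 hbot
        · rintro x y ⟨F, hF, hx⟩ hxy; exact ⟨F, hF, (hcS hF).2.2.1 x y hx hxy⟩
        · rintro x y ⟨F, hF, hx⟩ ⟨G, hG, hy⟩
          rcases eq_or_ne F G with rfl | hne
          · exact ⟨F, hF, (hcS hF).2.2.2 x y hx hy⟩
          · rcases hchain hF hG hne with h | h
            · exact ⟨G, hG, (hcS hG).2.2.2 x y (h hx) hy⟩
            · exact ⟨F, hF, (hcS hF).2.2.2 x y hx (h hy)⟩
      obtain ⟨m, hsub, hm⟩ := zorn_subset_nonempty S hzorn _ hbase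
      obtain ⟨hbm, hbotm, hupm, hinfm⟩ := hm.1
      refine ⟨m, hbm, hbotm, hupm, hinfm, ?_⟩
      intro x
      by_contra hcon
      push_neg at hcon
      obtain ⟨hx, hxc⟩ := hcon
      set F' : Set A := {z | ∃ f ∈ m, f ⊓ x ≤ z} with hF'
      have hF'S : F' ∈ S := by
        refine ⟨⟨b, hbm, inf_le_left⟩, ?_, ?_, ?_⟩
        · rintro ⟨f, hf, hle⟩
          have : f ≤ xᶜ := le_compl_iff_disjoint_right.mpr (disjoint_iff.mpr
            (le_bot_iff.mp hle))
          exact hxc (hupm f xᶜ hf this)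
        · rintro z w ⟨f, hf, hle⟩ hzw; exact ⟨f, hf, le_trans hle hzw⟩
        · rintro z w ⟨f, hf, h1⟩ ⟨g, hg, h2⟩
          refine ⟨f ⊓ g, hinfm f g hf hg, le_inf ?_ ?_⟩
          · exact le_trans (inf_le_inf_right x inf_le_left) h1
          · exact le_trans (inf_le_inf_right x inf_le_right) h2
      have hmF' : m ⊆ F' := fun f hf => ⟨f, hf, inf_le_left⟩
      have : F' ⊆ m := hm.2 hF'S hmF'
      exact hx (this ⟨b, hbm, inf_le_right⟩)
    -- good ultrafilters containing a given nonzero element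
    have good : ∀ a : A, a ≠ ⊥ → ∃ F : Set A, a ∈ F ∧ ⊥ ∉ F ∧
        (∀ x y : A, x ∈ F → x ≤ y → y ∈ F) ∧ (∀ x y : A, x ∈ F → y ∈ F → x ⊓ y ∈ F) ∧
        (∀ x : A, x ∈ F ∨ xᶜ ∈ F) ∧ (∀ σ : Perm (Fin n), ∃ x ∈ X, φ σ x ∉ F) := by
      intro a ha
      have step : ∀ (l : List (Perm (Fin n))), ∃ c' : A, c' ≤ a ∧ c' ≠ ⊥ ∧
          ∀ σ ∈ l, ∃ x ∈ X, c' ≤ (φ σ x)ᶜ := by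
        intro l
        induction l with
        | nil => exact ⟨a, le_refl a, ha, by simp⟩
        | cons σ l ih =>
          obtain ⟨c, hca, hc, hl⟩ := ih
          obtain ⟨x, hx, hnle⟩ := hmeet σ c hc
          refine ⟨c ⊓ (φ σ x)ᶜ, le_trans inf_le_left hca, ?_, ?_⟩
          · intro heq
            exact hnle (by
              have : Disjoint c (φ σ x)ᶜ := disjoint_iff.mpr heq
              have := le_compl_iff_disjoint_right.mpr this
              rwa [compl_compl] at this)
          · intro σ' hσ'
            rcases List.mem_cons.mp hσ' with rfl | hmem
            · exact ⟨x, hx, inf_le_right⟩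
            · obtain ⟨x', hx', h⟩ := hl σ' hmem
              exact ⟨x', hx', le_trans inf_le_left h⟩
      obtain ⟨c, hca, hc, hl⟩ := step (Finset.univ : Finset (Perm (Fin n))).toList
      obtain ⟨F, hcF, hbot, hup, hinf, hultra⟩ := uf c hc
      refine ⟨F, hup c a hcF hca, hbot, hup, hinf, hultra, ?_⟩
      intro σ
      obtain ⟨x, hx, hle⟩ := hl σ (Finset.mem_toList.mpr (Finset.mem_univ σ))
      refine ⟨x, hx, fun hmem => ?_⟩
      have h1 : (φ σ x)ᶜ ∈ F := hup c _ hcF hle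
      have : φ σ x ⊓ (φ σ x)ᶜ ∈ F := hinf _ _ hmem h1
      rw [inf_compl_eq_bot] at this
      exact hbot this
    -- encoding of subsets of A as subsets of ℕ
    obtain ⟨enc, henc⟩ := exists_injective_nat A
    set GoodUF : Set A → Prop := fun F => ⊥ ∉ F ∧
      (∀ x y : A, x ∈ F → x ≤ y → y ∈ F) ∧ (∀ x y : A, x ∈ F → y ∈ F → x ⊓ y ∈ F) ∧
      (∀ x : A, x ∈ F ∨ xᶜ ∈ F) ∧ (∀ σ : Perm (Fin n), ∃ x ∈ X, φ σ x ∉ F) with hGoodUF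
    set W : Type := Fin n × Set ℕ with hW
    set P : Perm (Fin n) → Set A → (Fin n → W) := fun σ F i => (σ i, enc '' F) with hP
    have Pinj : ∀ (σ σ' : Perm (Fin n)) (F F' : Set A),
        P σ F = P σ' F' → σ = σ' ∧ F = F' := by
      intro σ σ' F F' h
      constructor
      · exact Equiv.ext fun i => congrArg Prod.fst (congrFun h i)
      · have := congrArg Prod.snd (congrFun h ⟨0, by omega⟩)
        exact henc.image_injective this
    have Pswap : ∀ (σ : Perm (Fin n)) (F : Set A) (i j : Fin n),
        P σ F ∘ (Equiv.swap i j) = P (σ * Equiv.swap i j) F := by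
      intro σ F i j
      funext k
      simp [hP, Perm.mul_apply]
    set V : Set (Fin n → W) := {q | ∃ σ F, GoodUF F ∧ q = P σ F} with hV
    set f : A → Set (Fin n → W) :=
      fun x => {q | ∃ σ F, GoodUF F ∧ q = P σ F ∧ φ σ x ∈ F} with hf
    have fsub : ∀ x : A, f x ⊆ V := by
      rintro x q ⟨σ, F, hF, hq, _⟩; exact ⟨σ, F, hF, hq⟩
    refine ⟨W, V, f, ?_, fsub, ?_, ?_, ?_, ?_, ?_, ?_⟩
    · -- permutability
      rintro i j hij q ⟨σ, F, hF, rfl⟩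
      exact ⟨σ * Equiv.swap i j, F, hF, Pswap σ F i j⟩
    · -- injectivity
      have hord : ∀ x y : A, f x ⊆ f y → x ≤ y := by
        intro x y hsub2
        by_contra hxy
        have hb : x ⊓ yᶜ ≠ ⊥ := by
          intro heq
          have : Disjoint x yᶜ := disjoint_iff.mpr heq
          have := le_compl_iff_disjoint_right.mpr this
          rw [compl_compl] at this
          exact hxy this
        obtain ⟨F, hmem, hbot, hup, hinf, hultra, hgood⟩ := good _ hb
        have hFgood : GoodUF F := ⟨hbot, hup, hinf, hultra, hgood⟩
        have hxF : x ∈ F := hup _ _ hmem inf_le_left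
        have hycF : yᶜ ∈ F := hup _ _ hmem inf_le_right
        have hq : P 1 F ∈ f x := ⟨1, F, hFgood, rfl, by simpa using hxF⟩
        obtain ⟨σ', F', hF', heq, hyF'⟩ := hsub2 hq
        obtain ⟨hσ, hFeq⟩ := Pinj 1 σ' F F' heq
        subst hFeq
        rw [← hσ] at hyF'
        simp only [map_one, Perm.one_apply] at hyF'
        have : y ⊓ yᶜ ∈ F := hinf _ _ hyF' hycF
        rw [inf_compl_eq_bot] at this
        exact hbot this
      intro x y hxy
      exact le_antisymm (hord x y (hxy ▸ Set.Subset.refl _))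
        (hord y x (hxy ▸ Set.Subset.refl _))
    · -- meets
      intro x y
      ext q
      constructor
      · rintro ⟨σ, F, hF, rfl, hm⟩
        rw [(Shom σ).1] at hm
        exact ⟨⟨σ, F, hF, rfl, hF.2.1 _ _ hm inf_le_left⟩,
          ⟨σ, F, hF, rfl, hF.2.1 _ _ hm inf_le_right⟩⟩
      · rintro ⟨⟨σ, F, hF, rfl, h1⟩, ⟨σ', F', hF', heq, h2⟩⟩
        obtain ⟨hσ, hFeq⟩ := Pinj σ σ' F F' heq
        subst hFeq; rw [← hσ] at h2
        exact ⟨σ, F, hF, rfl, by rw [(Shom σ).1]; exact hF.2.2.1 _ _ h1 h2⟩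
    · -- complements
      intro x
      ext q
      constructor
      · rintro ⟨σ, F, hF, rfl, hm⟩
        rw [(Shom σ).2] at hm
        refine ⟨⟨σ, F, hF, rfl⟩, ?_⟩
        rintro ⟨σ', F', hF', heq, h2⟩
        obtain ⟨hσ, hFeq⟩ := Pinj σ σ' F F' heq
        subst hFeq; rw [← hσ] at h2
        have : φ σ x ⊓ (φ σ x)ᶜ ∈ F := hF.2.2.1 _ _ h2 hm
        rw [inf_compl_eq_bot] at this
        exact hF.1 this
      · rintro ⟨⟨σ, F, hF, rfl⟩, hnot⟩
        rcases hF.2.2.2.1 (φ σ x) with h | h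
        · exact absurd ⟨σ, F, hF, rfl, h⟩ hnot
        · exact ⟨σ, F, hF, rfl, by rw [(Shom σ).2]; exact h⟩
    · -- top
      ext q
      constructor
      · rintro ⟨σ, F, hF, rfl, _⟩; exact ⟨σ, F, hF, rfl⟩
      · rintro ⟨σ, F, hF, rfl⟩
        refine ⟨σ, F, hF, rfl, ?_⟩
        rw [Stop]
        rcases hF.2.2.2.1 ⊤ with h | h
        · exact h
        · rw [compl_top] at h; exact absurd h hF.1
    · -- the substitution operators
      intro i j hij x
      ext q
      constructor
      · rintro ⟨σ, F, hF, rfl, hm⟩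
        refine ⟨⟨σ, F, hF, rfl⟩, ?_⟩
        rw [Pswap]
        exact ⟨σ * Equiv.swap i j, F, hF, rfl, by rw [Skey σ i j hij]; exact hm⟩
      · rintro ⟨⟨σ, F, hF, rfl⟩, hcomp⟩
        rw [Pswap] at hcomp
        obtain ⟨σ', F', hF', heq, h2⟩ := hcomp
        obtain ⟨hσ, hFeq⟩ := Pinj _ σ' F F' heq
        subst hFeq; rw [← hσ, Skey σ i j hij] at h2
        exact ⟨σ, F, hF, rfl, h2⟩
    · -- omitting X
      rw [Set.eq_empty_iff_forall_notMem]
      intro q hq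
      have hXne : X.Nonempty := by
        rcases X.eq_empty_or_nonempty with rfl | h
        · exfalso
          have : (⊤ : A) ≤ ⊥ := hX.2 (by simp [lowerBounds])
          exact top_ne_bot (le_bot_iff.mp this)
        · exact h
      obtain ⟨x0, hx0⟩ := hXne
      have hmem := Set.mem_iInter₂.mp hq
      obtain ⟨σ, F, hF, rfl, _⟩ := hmem x0 hx0
      obtain ⟨x, hx, hnot⟩ := hF.2.2.2.2 σ
      obtain ⟨σ', F', hF', heq, h2⟩ := hmem x hx
      obtain ⟨hσ, hFeq⟩ := Pinj σ σ' F F' heq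
      subst hFeq; rw [← hσ] at h2
      exact hnot h2
end

section
/- Let n ≥ 2, let A be a transposition algebra of dimension n, let V ⊆ ^nW be permutable, and let f : A → 𝒫(V) be a representation (a homomorphism preserving ⊓ as ∩, complement relative to V, 1 as V, and with f(s_{ij}x) = {q ∈ V : q ∘ [i,j] ∈ f(x)}) which is atomic, i.e. ⋃_{x ∈ At A} f(x) = V. Then for every Y ⊆ A, if 0 is the greatest lower bound of Y then ⋂_{y ∈ Y} f(y) = ∅. -/
/-- an atomic representation of a transposition algebra omits every
non-principal type: if `⋃_{atoms} f x = V` and `0` is the greatest lower bound of `Y`,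
then the intersection (taken in `𝒫(V)`) of the images of `Y` is empty. -/
theorem atomic_representation_omits_nonprincipal_types (n : ℕ) (hn : 2 ≤ n)
    {A : Type*} [BooleanAlgebra A] (M : TranspositionAlgebra (Fin n) A)
    (W : Type*) (V : Set (Fin n → W))
    (hV : ∀ i j : Fin n, i ≠ j → ∀ q ∈ V, q ∘ (Equiv.swap i j) ∈ V)
    (f : A → Set (Fin n → W))
    (hsub : ∀ x : A, f x ⊆ V)
    (hinf : ∀ x y : A, f (x ⊓ y) = f x ∩ f y)
    (hcompl : ∀ x : A, f xᶜ = V \ f x)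
    (htop : f ⊤ = V)
    (hs : ∀ i j : Fin n, i ≠ j → ∀ x : A,
      f (M.s i j x) = {q ∈ V | q ∘ (Equiv.swap i j) ∈ f x})
    (hatomic : (⋃ x ∈ {b : A | IsAtom b}, f x) = V)
    (Y : Set A) (hY : IsGLB Y ⊥) :
    V ∩ (⋂ y ∈ Y, f y) = ∅ := by
  by_contra h
  obtain ⟨q, hqV, hqI⟩ := Set.nonempty_iff_ne_empty.2 h
  rw [← hatomic] at hqV
  obtain ⟨a, ha, hqa⟩ := Set.mem_iUnion₂.1 hqV
  have hbot : f ⊥ = ∅ := by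
    have := hcompl (⊤ : A)
    rw [compl_top, htop] at this
    simp [this]
  have hle : ∀ y ∈ Y, a ≤ y := by
    intro y hy
    by_contra hle'
    have hlt : a ⊓ y < a :=
      lt_of_le_of_ne inf_le_left (fun h => hle' (inf_eq_left.mp h))
    have hz : a ⊓ y = ⊥ := ha.2 _ hlt
    have hq : q ∈ f (a ⊓ y) := by
      rw [hinf]
      exact ⟨hqa, Set.mem_iInter₂.1 hqI y hy⟩
    rw [hz, hbot] at hq
    exact hq
  have : a ≤ ⊥ := hY.2 hle
  exact ha.1 (le_bot_iff.mp this)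
end

section
/- (Infinite-dimensional representation theorem.) Let ι be an infinite type and let A be a transposition algebra of dimension ι. Let S be the set of bijections σ : ι → ι with {i : σ(i) ≠ i} finite. Then for every nonzero a ∈ A there is a homomorphism h : A → 𝒫(S) with h(a) ≠ ∅, where h(x ⊓ y) = h(x) ∩ h(y), h(xᶜ) = S ∖ h(x), h(1) = S, and h(s_{ij}x) = {σ ∈ S : σ ∘ [i,j] ∈ h(x)} for all i ≠ j in ι. -/
open Equiv Function

namespace Order.Ideal

variable {P : Type*}

theorem exists_isPrime_notMem [DistribLattice P] [OrderBot P] {a : P} (ha : a ≠ ⊥) :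
    ∃ J : Ideal P, J.IsPrime ∧ a ∉ J := by
  obtain ⟨J, hJ, -, hdisj⟩ := DistribLattice.prime_ideal_of_disjoint_filter_ideal
    (F := PFilter.principal a) (I := principal ⊥)
    (Set.disjoint_left.2 fun _ hax hx => ha (le_bot_iff.1 (PFilter.mem_principal.1 hax |>.trans
      (mem_principal.1 hx))))
  exact ⟨J, hJ, Set.disjoint_left.1 hdisj (PFilter.mem_principal.2 le_rfl)⟩

theorem IsPrime.inf_mem_iff [SemilatticeInf P] {J : Ideal P} (hJ : J.IsPrime) {x y : P} :
    x ⊓ y ∈ J ↔ x ∈ J ∨ y ∈ J :=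
  ⟨hJ.mem_or_mem, fun h => h.elim (J.lower inf_le_left) (J.lower inf_le_right)⟩

theorem IsPrime.compl_mem_iff [BooleanAlgebra P] {J : Ideal P} (hJ : J.IsPrime) {x : P} :
    xᶜ ∈ J ↔ x ∉ J :=
  ⟨hJ.toIsProper.notMem_of_compl_mem, hJ.compl_mem_of_notMem⟩

end Order.Ideal

namespace Equiv.Perm

variable {ι : Type*}

theorem setOf_mul_apply_ne_subset (σ τ : Perm ι) :
    {i | (σ * τ) i ≠ i} ⊆ {i | σ i ≠ i} ∪ {i | τ i ≠ i} := by
  intro i hi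
  by_contra h
  simp_all

variable (ι) in
def finitary : Subgroup (Perm ι) where
  carrier := {σ | {i | σ i ≠ i}.Finite}
  mul_mem' hσ hτ := (hσ.union hτ).subset (setOf_mul_apply_ne_subset _ _)
  one_mem' := by simp
  inv_mem' {σ} (hσ : {i | σ i ≠ i}.Finite) := by
    show {i | σ⁻¹ i ≠ i}.Finite
    simpa only [ne_eq, inv_eq_iff_eq, eq_comm (a := σ _)] using hσ

theorem image_coe_finitary :
    (⇑) '' (finitary ι : Set (Perm ι)) =
      {σ : ι → ι | Bijective σ ∧ {i | σ i ≠ i}.Finite} := by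
  ext σ
  constructor
  · rintro ⟨e, he, rfl⟩
    exact ⟨e.bijective, he⟩
  · rintro ⟨hσ, hfin⟩
    exact ⟨ofBijective σ hσ, hfin, rfl⟩

theorem image_coe_setOf_mul_mem (g : Perm ι) (X : Set (Perm ι)) :
    (⇑) '' {e ∈ finitary ι | e * g ∈ X} =
      {σ : ι → ι | (Bijective σ ∧ {i | σ i ≠ i}.Finite) ∧ σ ∘ g ∈ (⇑) '' X} := by
  ext σ
  change _ ↔ σ ∈ {σ : ι → ι | Bijective σ ∧ {i | σ i ≠ i}.Finite} ∧ _
  rw [← image_coe_finitary]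
  constructor
  · rintro ⟨e, ⟨he, hX⟩, rfl⟩
    exact ⟨⟨e, he, rfl⟩, e * g, hX, rfl⟩
  · rintro ⟨⟨e, he, rfl⟩, e', hX, he'⟩
    obtain rfl : e' = e * g := DFunLike.coe_injective he'
    exact ⟨e, ⟨he, hX⟩, rfl⟩

variable [DecidableEq ι]

theorem swap_mem_finitary (a b : ι) : swap a b ∈ finitary ι :=
  (Set.toFinite {a, b}).subset fun i hi => by
    by_contra h
    simp only [Set.mem_insert_iff, Set.mem_singleton_iff, not_or] at h
    exact hi (swap_apply_of_ne_of_ne h.1 h.2)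

theorem ncard_setOf_swap_mul_apply_ne_lt {σ : Perm ι} (hσ : σ ∈ finitary ι) {c : ι}
    (hc : σ c ≠ c) :
    {i | (swap c (σ c) * σ) i ≠ i}.ncard < {i | σ i ≠ i}.ncard := by
  refine Set.ncard_lt_ncard ⟨fun i hi => ?_, fun h => ?_⟩ hσ
  · show σ i ≠ i
    intro hσi
    have hic : i ≠ c := by rintro rfl; exact hc hσi
    have hiσc : i ≠ σ c := by rintro rfl; exact hc (σ.injective hσi)
    exact hi (by rw [mul_apply, hσi, swap_apply_of_ne_of_ne hic hiσc])
  · exact h hc (by simp)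

theorem swap_apply_swap_mul_swap (a b c d : ι) :
    swap (swap a b c) (swap a b d) * swap a b = swap a b * swap c d := by
  rw [swap_apply_apply, swap_inv, mul_assoc _ (swap a b), swap_mul_self, mul_one]

@[elab_as_elim]
theorem finitary_induction {P : (σ : Perm ι) → σ ∈ finitary ι → Prop}
    (step : ∀ σ (hσ : σ ∈ finitary ι),
      (∀ c, σ c ≠ c → P (swap c (σ c) * σ) (mul_mem (swap_mem_finitary _ _) hσ)) →
        P σ hσ)
    {σ : Perm ι} (hσ : σ ∈ finitary ι) : P σ hσ := by
  induction h : {i | σ i ≠ i}.ncard using Nat.strong_induction_on generalizing σ with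
  | _ n ih =>
    exact step σ hσ fun c hc => ih _ (h ▸ ncard_setOf_swap_mul_apply_ne_lt hσ hc) _ rfl

end Equiv.Perm

namespace TranspositionAlgebra

open Equiv.Perm

variable {ι A : Type*} [BooleanAlgebra A] (M : TranspositionAlgebra ι A)

theorem s_s_eq_s_s_of_braid {i j k : ι} (hij : i ≠ j) (hjk : j ≠ k) (hik : i ≠ k) (x : A) :
    M.s j k (M.s i j x) = M.s i j (M.s i k x) := by
  rw [← M.braid i j k hij hjk hik, M.invol i j hij]

variable [DecidableEq ι]

theorem s_conj {i j c d : ι} (hij : i ≠ j) (hcd : c ≠ d) (x : A) :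
    M.s (swap i j c) (swap i j d) (M.s i j x) = M.s i j (M.s c d x) := by
  have hfresh : ∀ {c d : ι}, c ≠ d → d ≠ i → d ≠ j →
      M.s (swap i j c) (swap i j d) (M.s i j x) = M.s i j (M.s c d x) := by
    intro c d hcd hdi hdj
    rw [swap_apply_of_ne_of_ne hdi hdj]
    rcases eq_or_ne c i with rfl | hci
    · rw [swap_apply_left, M.s_s_eq_s_s_of_braid hij hdj.symm hcd]
    rcases eq_or_ne c j with rfl | hcj
    · rw [swap_apply_right, M.symm i c hij, M.s_s_eq_s_s_of_braid hij.symm hdi.symm hcd]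
    · rw [swap_apply_of_ne_of_ne hci hcj,
        M.comm i j c d hij hcd hci.symm hdi.symm hcj.symm hdj.symm]
  by_cases hd : d ≠ i ∧ d ≠ j
  · exact hfresh hcd hd.1 hd.2
  by_cases hc : c ≠ i ∧ c ≠ j
  · rw [M.symm _ _ ((swap i j).injective.ne hcd), M.symm c d hcd]
    exact hfresh hcd.symm hc.1 hc.2
  obtain ⟨rfl, rfl⟩ | ⟨rfl, rfl⟩ : c = i ∧ d = j ∨ c = j ∧ d = i := by grind
  · rw [swap_apply_left, swap_apply_right, M.symm d c hij.symm]
  · rw [swap_apply_left, swap_apply_right, M.symm d c hij]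

open Classical in
/-- `[c, σ c] σ` fixes `c`, so it moves fewer points than `σ`. Junk value: `id` on permutations
of infinite support. -/
noncomputable def permAct (σ : Perm ι) : A → A :=
  if h : σ ∈ finitary ι ∧ ∃ c, σ c ≠ c then
    M.s h.2.choose (σ h.2.choose) ∘ permAct (swap h.2.choose (σ h.2.choose) * σ)
  else id
termination_by {i | σ i ≠ i}.ncard
decreasing_by exact ncard_setOf_swap_mul_apply_ne_lt h.1 h.2.choose_spec

theorem permAct_one : M.permAct 1 = id := by
  rw [permAct, dif_neg (by simp)]

theorem exists_permAct_eq {σ : Perm ι} (hσ : σ ∈ finitary ι) (h1 : σ ≠ 1) :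
    ∃ c, σ c ≠ c ∧ M.permAct σ = M.s c (σ c) ∘ M.permAct (swap c (σ c) * σ) := by
  have h : σ ∈ finitary ι ∧ ∃ c, σ c ≠ c := ⟨hσ, DFunLike.ne_iff.1 h1⟩
  exact ⟨_, h.2.choose_spec, by rw [permAct, dif_pos h]⟩

theorem permAct_inf (σ : Perm ι) (x y : A) :
    M.permAct σ (x ⊓ y) = M.permAct σ x ⊓ M.permAct σ y := by
  fun_induction M.permAct σ with
  | case1 σ h ih => rw [comp_apply, ih, M.map_inf _ _ h.2.choose_spec.symm]; rfl
  | case2 => rfl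

theorem permAct_compl (σ : Perm ι) (x : A) : M.permAct σ xᶜ = (M.permAct σ x)ᶜ := by
  fun_induction M.permAct σ with
  | case1 σ h ih => rw [comp_apply, ih, M.map_compl _ _ h.2.choose_spec.symm]; rfl
  | case2 => rfl

theorem permAct_top (σ : Perm ι) : M.permAct σ ⊤ = ⊤ := by
  have hbot : M.permAct σ ⊥ = ⊥ := by
    simpa only [permAct_compl, inf_compl_self] using M.permAct_inf σ ⊤ ⊤ᶜ
  rw [← compl_bot, permAct_compl, hbot]


theorem permAct_swap {i j : ι} (hij : i ≠ j) : M.permAct (swap i j) = M.s i j := by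
  obtain ⟨c, hc, h⟩ := M.exists_permAct_eq (swap_mem_finitary i j) (swap_eq_one_iff.not.2 hij)
  rcases (swap_apply_ne_self_iff.1 hc).2 with rfl | rfl
  · rw [h, swap_apply_left, swap_mul_self, permAct_one, comp_id]
  · rw [h, swap_apply_right, swap_comm c i, swap_mul_self, permAct_one, comp_id,
      M.symm c i hij.symm]

theorem s_comp_permAct_swap_mul_of_apply_ne {σ : Perm ι} {i j c : ι} (hij : i ≠ j) (hcj : c ≠ j)
    (hσc : σ c ≠ c) (hc : (swap i j * σ) c ≠ c)
    (ih : ∀ {k l : ι}, k ≠ l → M.permAct (swap k l * (swap c (σ c) * σ)) =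
      M.s k l ∘ M.permAct (swap c (σ c) * σ)) :
    M.s c ((swap i j * σ) c) ∘ M.permAct (swap c ((swap i j * σ) c) * (swap i j * σ)) =
      M.s i j ∘ M.permAct σ := by
  have hσ_act : M.permAct σ = M.s c (σ c) ∘ M.permAct (swap c (σ c) * σ) := by
    simpa only [swap_mul_self_mul] using ih (Ne.symm hσc)
  rw [hσ_act, mul_apply]
  by_cases hci : c = i
  · subst hci
    have hσj : σ c ≠ j := by rintro hσj; exact hc (by rw [mul_apply, hσj, swap_apply_right])
    have hperm : swap c (σ c) * (swap c j * σ) = swap (σ c) j * (swap c (σ c) * σ) := by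
      have := swap_apply_swap_mul_swap c (σ c) c j
      rw [swap_apply_left, swap_apply_of_ne_of_ne hij.symm hσj.symm] at this
      rw [← mul_assoc, ← this, mul_assoc]
    rw [swap_apply_of_ne_of_ne hσc hσj, hperm, ih hσj]
    funext x
    have := M.s_conj (Ne.symm hσc) hσj (M.permAct (swap c (σ c) * σ) x)
    rw [swap_apply_right, swap_apply_of_ne_of_ne hij.symm hσj.symm] at this
    exact this.symm
  · have hperm : swap c (swap i j (σ c)) * (swap i j * σ) = swap i j * (swap c (σ c) * σ) := by
      have := swap_apply_swap_mul_swap i j c (σ c)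
      rw [swap_apply_of_ne_of_ne hci hcj] at this
      rw [← mul_assoc, this, mul_assoc]
    rw [hperm, ih hij]
    funext x
    have := M.s_conj hij (Ne.symm hσc) (M.permAct (swap c (σ c) * σ) x)
    rwa [swap_apply_of_ne_of_ne hci hcj] at this

theorem permAct_swap_mul {σ : Perm ι} (hσ : σ ∈ finitary ι) {i j : ι} (hij : i ≠ j) :
    M.permAct (swap i j * σ) = M.s i j ∘ M.permAct σ := by
  induction hσ using finitary_induction generalizing i j with
  | step σ hσ ih =>
    by_cases hπ : swap i j * σ = 1
    · obtain rfl : σ = swap i j := by rw [← swap_inv]; exact eq_inv_of_mul_eq_one_right hπ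
      rw [hπ, permAct_one, permAct_swap M hij]
      exact funext fun x => (M.invol i j hij x).symm
    obtain ⟨c, hc, hact⟩ := M.exists_permAct_eq (mul_mem (swap_mem_finitary i j) hσ) hπ
    rw [hact]
    clear hπ hact
    wlog hcj : c ≠ j generalizing i j
    · have := this hij.symm (by rwa [swap_comm]) (by rintro rfl; exact hij (not_not.1 hcj))
      rwa [swap_comm j i, M.symm j i hij.symm] at this
    by_cases hσc : σ c = c
    · obtain rfl : c = i := by
        by_contra hci
        exact hc (by rw [mul_apply, hσc, swap_apply_of_ne_of_ne hci hcj])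
      rw [mul_apply, hσc, swap_apply_left, swap_mul_self_mul]
    · exact M.s_comp_permAct_swap_mul_of_apply_ne hij hcj hσc hc (ih c hσc)

theorem permAct_mul {σ τ : Perm ι} (hσ : σ ∈ finitary ι) (hτ : τ ∈ finitary ι) :
    M.permAct (σ * τ) = M.permAct σ ∘ M.permAct τ := by
  induction hσ using finitary_induction with
  | step σ hσ ih =>
    rcases eq_or_ne σ 1 with rfl | h1
    · rw [one_mul, permAct_one, id_comp]
    obtain ⟨c, hc : σ c ≠ c⟩ := DFunLike.ne_iff.1 h1
    have hρ : swap c (σ c) * σ ∈ finitary ι := mul_mem (swap_mem_finitary _ _) hσ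
    calc M.permAct (σ * τ) = M.permAct (swap c (σ c) * ((swap c (σ c) * σ) * τ)) := by
          rw [← mul_assoc, swap_mul_self_mul]
      _ = (M.s c (σ c) ∘ M.permAct (swap c (σ c) * σ)) ∘ M.permAct τ := by
          rw [M.permAct_swap_mul (mul_mem hρ hτ) (Ne.symm hc), ih c hc]
          rfl
      _ = M.permAct σ ∘ M.permAct τ := by
          rw [← M.permAct_swap_mul hρ (Ne.symm hc), swap_mul_self_mul]

end TranspositionAlgebra

open Equiv.Perm TranspositionAlgebra

theorem transpositionAlgebra_representation_infinite_dim_general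
    (ι : Type*) [DecidableEq ι]
    {A : Type*} [BooleanAlgebra A] (M : TranspositionAlgebra ι A)
    (a : A) (ha : a ≠ ⊥) :
    ∃ h : A → Set (ι → ι),
      (∀ x : A, h x ⊆ {σ : ι → ι | Function.Bijective σ ∧ {i : ι | σ i ≠ i}.Finite}) ∧
      h a ≠ ∅ ∧
      (∀ x y : A, h (x ⊓ y) = h x ∩ h y) ∧
      (∀ x : A, h xᶜ =
        {σ : ι → ι | Function.Bijective σ ∧ {i : ι | σ i ≠ i}.Finite} \ h x) ∧
      h ⊤ = {σ : ι → ι | Function.Bijective σ ∧ {i : ι | σ i ≠ i}.Finite} ∧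
      (∀ i j : ι, i ≠ j → ∀ x : A,
        h (M.s i j x) = {σ : ι → ι |
          (Function.Bijective σ ∧ {i : ι | σ i ≠ i}.Finite) ∧
            σ ∘ (Equiv.swap i j) ∈ h x}) := by
  obtain ⟨J, hJ, haJ⟩ := Order.Ideal.exists_isPrime_notMem ha
  refine ⟨fun x => (⇑) '' {σ ∈ finitary ι | M.permAct σ x ∉ J}, fun x => ?_, ?_,
    fun x y => ?_, fun x => ?_, ?_, fun i j hij x => ?_⟩
  · exact image_coe_finitary ▸ Set.image_mono (Set.sep_subset _ _)
  · exact Set.nonempty_iff_ne_empty.1 ⟨_, 1, ⟨one_mem _, by rwa [permAct_one]⟩, rfl⟩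
  · rw [← Set.image_inter DFunLike.coe_injective]
    refine congrArg _ (Set.ext fun σ => ?_)
    simp only [Set.mem_ofPred_eq, Set.mem_inter_iff, permAct_inf, hJ.inf_mem_iff]
    tauto
  · rw [← image_coe_finitary, ← Set.image_sdiff DFunLike.coe_injective]
    refine congrArg _ (Set.ext fun σ => ?_)
    simp only [Set.mem_ofPred_eq, Set.mem_sdiff, SetLike.mem_coe, permAct_compl, hJ.compl_mem_iff]
    tauto
  · rw [← image_coe_finitary]
    refine congrArg _ (Set.ext fun σ => ?_)
    simp [permAct_top, hJ.toIsProper.top_notMem]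
  · rw [← image_coe_setOf_mul_mem]
    refine congrArg _ (Set.ext fun σ => and_congr_right fun hσ => ?_)
    rw [Set.mem_ofPred_eq, M.permAct_mul hσ (swap_mem_finitary i j), M.permAct_swap hij,
      comp_apply, and_iff_right (mul_mem hσ (swap_mem_finitary i j))]

/-- infinite-dimensional representation: for an infinite dimension `ι`,
every nonzero element of a transposition algebra of dimension `ι` is separated from zero
by a homomorphism into `𝒫(S)`, where `S` is the permutable set of finitely supported
bijections of `ι`. -/
theorem transpositionAlgebra_representation_infinite_dim
    (ι : Type*) [Infinite ι] [DecidableEq ι]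
    {A : Type*} [BooleanAlgebra A] (M : TranspositionAlgebra ι A)
    (a : A) (ha : a ≠ ⊥) :
    ∃ h : A → Set (ι → ι),
      (∀ x : A, h x ⊆ {σ : ι → ι | Function.Bijective σ ∧ {i : ι | σ i ≠ i}.Finite}) ∧
      h a ≠ ∅ ∧
      (∀ x y : A, h (x ⊓ y) = h x ∩ h y) ∧
      (∀ x : A, h xᶜ =
        {σ : ι → ι | Function.Bijective σ ∧ {i : ι | σ i ≠ i}.Finite} \ h x) ∧
      h ⊤ = {σ : ι → ι | Function.Bijective σ ∧ {i : ι | σ i ≠ i}.Finite} ∧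
      (∀ i j : ι, i ≠ j → ∀ x : A,
        h (M.s i j x) = {σ : ι → ι |
          (Function.Bijective σ ∧ {i : ι | σ i ≠ i}.Finite) ∧
            σ ∘ (Equiv.swap i j) ∈ h x}) :=
  transpositionAlgebra_representation_infinite_dim_general ι M a ha
end

section
/- Let n ≥ 2 and let A be a substitution algebra with transpositions of dimension n that is completely representable, i.e. there exist a set W, a dipermutable V ⊆ ^nW, and an injective representation f : A → 𝒫(V) with ⋃_{x ∈ At A} f(x) = V. Then for every finite composite σ of the operations s_{ij}, s^i_j of A (including the empty composite), the set {σ(x) : x ∈ At A} has least upper bound 1 in A. -/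
/-- The replacement `[i/j]`, sending `i` to `j` and fixing everything else. -/
def replacement {ι : Type*} [DecidableEq ι] (i j : ι) : ι → ι := fun k => if k = i then j else k

/-- A substitution algebra with transpositions of dimension `ι` (an algebra satisfying the
equation set `Σ'_n`). -/
structure SubstTranspAlgebra (ι : Type*) (A : Type*) [BooleanAlgebra A] where
  t : ι → ι → A → A
  r : ι → ι → A → A
  t_inf : ∀ i j : ι, i ≠ j → ∀ x y : A, t i j (x ⊓ y) = t i j x ⊓ t i j y
  t_compl : ∀ i j : ι, i ≠ j → ∀ x : A, t i j xᶜ = (t i j x)ᶜ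
  r_inf : ∀ i j : ι, i ≠ j → ∀ x y : A, r i j (x ⊓ y) = r i j x ⊓ r i j y
  r_compl : ∀ i j : ι, i ≠ j → ∀ x : A, r i j xᶜ = (r i j x)ᶜ
  t_symm : ∀ i j : ι, i ≠ j → t i j = t j i
  t_invol : ∀ i j : ι, i ≠ j → ∀ x : A, t i j (t i j x) = x
  t_comm : ∀ i j k l : ι, i ≠ j → k ≠ l → i ≠ k → i ≠ l → j ≠ k → j ≠ l →
    ∀ x : A, t i j (t k l x) = t k l (t i j x)
  t_braid : ∀ i j k : ι, i ≠ j → j ≠ k → i ≠ k →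
    ∀ x : A, t i j (t j k (t i j x)) = t i k x
  tr_disjoint : ∀ i j k l : ι, i ≠ j → k ≠ l → i ≠ k → i ≠ l → j ≠ k → j ≠ l →
    ∀ x : A, t k l (r j i (t k l x)) = r j i x
  tr_jk : ∀ i j k : ι, i ≠ j → j ≠ k → i ≠ k →
    ∀ x : A, t j k (r j i (t j k x)) = r k i x
  tr_ki : ∀ i j k : ι, i ≠ j → j ≠ k → i ≠ k →
    ∀ x : A, t k i (r j i (t k i x)) = r j k x
  tr_ij : ∀ i j : ι, i ≠ j → ∀ x : A, t i j (r j i (t i j x)) = r i j x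
  rr_disjoint : ∀ i j k l : ι, i ≠ j → k ≠ l → i ≠ k → i ≠ l → j ≠ k → j ≠ l →
    ∀ x : A, r j i (r k l x) = r k l (r j i x)
  rr_comm : ∀ i j k : ι, i ≠ j → j ≠ k → i ≠ k →
    ∀ x : A, r j i (r k i x) = r k i (r j i x)
  rr_comm' : ∀ i j k : ι, i ≠ j → j ≠ k → i ≠ k →
    ∀ x : A, r k i (r j i x) = r j i (r k j x)
  rr_twist : ∀ i j k : ι, i ≠ j → j ≠ k → i ≠ k →
    ∀ x : A, r j i (r i k x) = r j k (t i j x)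
  rr_absorb : ∀ i j k : ι, i ≠ j → j ≠ k → i ≠ k →
    ∀ x : A, r j i (r j k x) = r j k x
  rr_idem : ∀ i j : ι, i ≠ j → ∀ x : A, r j i (r j i x) = r j i x
  rr_inv : ∀ i j : ι, i ≠ j → ∀ x : A, r j i (r i j x) = r j i x
  rt_absorb : ∀ i j : ι, i ≠ j → ∀ x : A, r j i (t i j x) = t i j x

/-- The finite composite of substitution operations encoded by a list: `Sum.inl (i,j)`
applies `s_{ij}` and `Sum.inr (i,j)` applies `s^i_j`; the empty list is the identity. -/
def applyOps {ι : Type*} {A : Type*} [BooleanAlgebra A] (M : SubstTranspAlgebra ι A) :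
    List ((ι × ι) ⊕ (ι × ι)) → A → A
  | [], x => x
  | (Sum.inl (i, j)) :: L, x => M.t i j (applyOps M L x)
  | (Sum.inr (i, j)) :: L, x => M.r i j (applyOps M L x)

/-- A list encodes a genuine composite when every operation in it has distinct indices. -/
def GoodOps {ι : Type*} (L : List ((ι × ι) ⊕ (ι × ι))) : Prop :=
  ∀ p ∈ L, Sum.elim (fun q : ι × ι => q.1 ≠ q.2) (fun q : ι × ι => q.1 ≠ q.2) p

/-!
A point `q` of `V` lies in `f (σ x)` iff `q ∘ τ` lies in `f x`, where `τ : Fin n → Fin n` is the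
composite of the swaps and replacements making up `σ`. As `V` is dipermutable, `q ∘ τ ∈ V`
lies in `f b` for some atom `b`, so `q ∈ f (σ b)`. Hence an upper bound `u` of all `σ b`
has `f u ⊇ V = f ⊤`, and `u = ⊤` since `f` is an injective meet-homomorphism.
-/

theorem GoodOps.of_cons {ι : Type*} {p : (ι × ι) ⊕ (ι × ι)} {L : List ((ι × ι) ⊕ (ι × ι))}
    (h : GoodOps (p :: L)) : GoodOps L :=
  fun p hp => h p (List.mem_cons_of_mem _ hp)

theorem image_subset_image_iff_le {α β : Type*} [SemilatticeInf α] {f : α → Set β}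
    (hinj : Function.Injective f) (hinf : ∀ x y : α, f (x ⊓ y) = f x ∩ f y) {x y : α} :
    f x ⊆ f y ↔ x ≤ y := by
  rw [← Set.inter_eq_left, ← hinf, hinj.eq_iff, inf_eq_left]

section Composite

variable {ι : Type*} [DecidableEq ι]

def opsCoordMap : List ((ι × ι) ⊕ (ι × ι)) → ι → ι
  | [] => id
  | (Sum.inl (i, j)) :: L => Equiv.swap i j ∘ opsCoordMap L
  | (Sum.inr (i, j)) :: L => replacement i j ∘ opsCoordMap L

variable {W : Type*} {V : Set (ι → W)}

theorem comp_opsCoordMap_mem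
    (hV : ∀ i j : ι, i ≠ j → ∀ q ∈ V, q ∘ (Equiv.swap i j) ∈ V ∧ q ∘ (replacement i j) ∈ V) :
    ∀ L : List ((ι × ι) ⊕ (ι × ι)), GoodOps L → ∀ q ∈ V, q ∘ opsCoordMap L ∈ V
  | [], _, _, hq => hq
  | (Sum.inl (i, j)) :: L, hL, q, hq =>
    comp_opsCoordMap_mem hV L hL.of_cons _ (hV i j (hL _ List.mem_cons_self) q hq).1
  | (Sum.inr (i, j)) :: L, hL, q, hq =>
    comp_opsCoordMap_mem hV L hL.of_cons _ (hV i j (hL _ List.mem_cons_self) q hq).2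

theorem mem_applyOps_iff {A : Type*} [BooleanAlgebra A] {M : SubstTranspAlgebra ι A}
    {f : A → Set (ι → W)}
    (hV : ∀ i j : ι, i ≠ j → ∀ q ∈ V, q ∘ (Equiv.swap i j) ∈ V ∧ q ∘ (replacement i j) ∈ V)
    (ht : ∀ i j : ι, i ≠ j → ∀ x : A, f (M.t i j x) = {q ∈ V | q ∘ (Equiv.swap i j) ∈ f x})
    (hr : ∀ i j : ι, i ≠ j → ∀ x : A, f (M.r i j x) = {q ∈ V | q ∘ (replacement i j) ∈ f x}) :
    ∀ L : List ((ι × ι) ⊕ (ι × ι)), GoodOps L → ∀ q ∈ V, ∀ x : A,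
      q ∈ f (applyOps M L x) ↔ q ∘ opsCoordMap L ∈ f x
  | [], _, _, _, _ => Iff.rfl
  | (Sum.inl (i, j)) :: L, hL, q, hq, x => by
    have hij : i ≠ j := hL _ List.mem_cons_self
    simp only [applyOps, opsCoordMap, ht i j hij, Set.mem_ofPred_eq, hq, true_and]
    exact mem_applyOps_iff hV ht hr L hL.of_cons _ (hV i j hij q hq).1 x
  | (Sum.inr (i, j)) :: L, hL, q, hq, x => by
    have hij : i ≠ j := hL _ List.mem_cons_self
    simp only [applyOps, opsCoordMap, hr i j hij, Set.mem_ofPred_eq, hq, true_and]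
    exact mem_applyOps_iff hV ht hr L hL.of_cons _ (hV i j hij q hq).2 x

end Composite

theorem substTranspAlgebra_complete_representation_sup_general (n : ℕ)
    {A : Type*} [BooleanAlgebra A] (M : SubstTranspAlgebra (Fin n) A)
    (W : Type*) (V : Set (Fin n → W))
    (hV : ∀ i j : Fin n, i ≠ j → ∀ q ∈ V,
      q ∘ (Equiv.swap i j) ∈ V ∧ q ∘ (replacement i j) ∈ V)
    (f : A → Set (Fin n → W))
    (hinj : Function.Injective f)
    (hinf : ∀ x y : A, f (x ⊓ y) = f x ∩ f y)
    (htop : f ⊤ = V)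
    (ht : ∀ i j : Fin n, i ≠ j → ∀ x : A,
      f (M.t i j x) = {q ∈ V | q ∘ (Equiv.swap i j) ∈ f x})
    (hr : ∀ i j : Fin n, i ≠ j → ∀ x : A,
      f (M.r i j x) = {q ∈ V | q ∘ (replacement i j) ∈ f x})
    (hatomscover : (⋃ x ∈ {b : A | IsAtom b}, f x) = V) :
    ∀ L : List ((Fin n × Fin n) ⊕ (Fin n × Fin n)), GoodOps L →
      IsLUB (applyOps M L '' {b : A | IsAtom b}) ⊤ := by
  intro L hL
  refine ⟨fun _ _ => le_top, fun u hu => ?_⟩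
  rw [← image_subset_image_iff_le hinj hinf, htop]
  intro q hq
  have hqL : q ∘ opsCoordMap L ∈ ⋃ x ∈ {b : A | IsAtom b}, f x := by
    rw [hatomscover]
    exact comp_opsCoordMap_mem hV L hL q hq
  obtain ⟨b, hb, hqb⟩ := Set.mem_iUnion₂.mp hqL
  have hσb : q ∈ f (applyOps M L b) := (mem_applyOps_iff hV ht hr L hL q hq b).mpr hqb
  exact (image_subset_image_iff_le hinj hinf).mpr (hu ⟨b, hb, rfl⟩) hσb

/-- conversely, if a substitution algebra with transpositions of dimension
`n ≥ 2` is completely representable, then for every finite composite `σ` of its operations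
the set `{σ(x) : x ∈ At A}` has least upper bound `1`. -/
theorem substTranspAlgebra_complete_representation_sup (n : ℕ) (hn : 2 ≤ n)
    {A : Type*} [BooleanAlgebra A] (M : SubstTranspAlgebra (Fin n) A)
    (W : Type*) (V : Set (Fin n → W))
    (hV : ∀ i j : Fin n, i ≠ j → ∀ q ∈ V,
      q ∘ (Equiv.swap i j) ∈ V ∧ q ∘ (replacement i j) ∈ V)
    (f : A → Set (Fin n → W))
    (hsub : ∀ x : A, f x ⊆ V)
    (hinj : Function.Injective f)
    (hinf : ∀ x y : A, f (x ⊓ y) = f x ∩ f y)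
    (hcompl : ∀ x : A, f xᶜ = V \ f x)
    (htop : f ⊤ = V)
    (ht : ∀ i j : Fin n, i ≠ j → ∀ x : A,
      f (M.t i j x) = {q ∈ V | q ∘ (Equiv.swap i j) ∈ f x})
    (hr : ∀ i j : Fin n, i ≠ j → ∀ x : A,
      f (M.r i j x) = {q ∈ V | q ∘ (replacement i j) ∈ f x})
    (hatomscover : (⋃ x ∈ {b : A | IsAtom b}, f x) = V) :
    ∀ L : List ((Fin n × Fin n) ⊕ (Fin n × Fin n)), GoodOps L →
      IsLUB (applyOps M L '' {b : A | IsAtom b}) ⊤ :=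
  substTranspAlgebra_complete_representation_sup_general n M W V hV f hinj hinf htop ht hr
    hatomscover
end

section
/- Let A be a Boolean algebra, let B be a Boolean subalgebra of A, let M be an ideal of B, and let N be an ideal of A such that N ∩ B ⊆ M. Then there exists an ideal N' of A with N ⊆ N' and N' ∩ B = M. Furthermore, if M is a maximal ideal of B, then N' can be chosen to be a maximal ideal of A. -/
/-- `B` is (the carrier of) a Boolean subalgebra of `A`: it contains `⊥` and `⊤` and is
closed under meet, join and complement. -/
def IsBooleanSubalgebra {A : Type*} [BooleanAlgebra A] (B : Set A) : Prop :=
  ⊥ ∈ B ∧ ⊤ ∈ B ∧ (∀ x ∈ B, ∀ y ∈ B, x ⊓ y ∈ B) ∧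
    (∀ x ∈ B, ∀ y ∈ B, x ⊔ y ∈ B) ∧ (∀ x ∈ B, xᶜ ∈ B)

/-- `M` is an ideal of the subalgebra with carrier `B`: a nonempty subset of `B`, downward
closed within `B`, and closed under finite joins. -/
def IsIdealIn {A : Type*} [BooleanAlgebra A] (B M : Set A) : Prop :=
  M ⊆ B ∧ M.Nonempty ∧ (∀ x ∈ M, ∀ y ∈ B, y ≤ x → y ∈ M) ∧
    (∀ x ∈ M, ∀ y ∈ M, x ⊔ y ∈ M)

/-- `M` is a maximal ideal of the subalgebra with carrier `B`: it is a proper ideal and is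
not properly contained in any proper ideal of `B`. -/
def IsMaximalIdealIn {A : Type*} [BooleanAlgebra A] (B M : Set A) : Prop :=
  IsIdealIn B M ∧ M ≠ B ∧ ∀ M' : Set A, IsIdealIn B M' → M ⊆ M' → M' ≠ B → M' = M

/-- if `B` is a Boolean subalgebra of `A`, `M` an ideal of `B` and `N` an
ideal of `A` with `N ∩ B ⊆ M`, then there is an ideal `N'` of `A` with `N ⊆ N'` and
`N' ∩ B = M`; moreover `N'` can be chosen maximal whenever `M` is maximal. -/
theorem ideal_extension {A : Type*} [BooleanAlgebra A]
    (B : Set A) (hB : IsBooleanSubalgebra B)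
    (M : Set A) (hM : IsIdealIn B M)
    (N : Set A) (hN : IsIdealIn Set.univ N)
    (hNB : N ∩ B ⊆ M) :
    ∃ N' : Set A, IsIdealIn Set.univ N' ∧ N ⊆ N' ∧ N' ∩ B = M ∧
      (IsMaximalIdealIn B M → IsMaximalIdealIn Set.univ N') := by
  obtain ⟨hMB, hMne, hMdown, hMjoin⟩ := hM
  obtain ⟨-, hNne, hNdown, hNjoin⟩ := hN
  obtain ⟨hbot, htop, hmeet, hjoin, hcompl⟩ := hB
  -- the ideal generated by M ∪ N
  set N0 : Set A := {x | ∃ m ∈ M, ∃ n ∈ N, x ≤ m ⊔ n} with hN0def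
  obtain ⟨m0, hm0⟩ := hMne
  obtain ⟨n0, hn0⟩ := hNne
  have hN0ideal : IsIdealIn Set.univ N0 := by
    refine ⟨Set.subset_univ _, ⟨m0, m0, hm0, n0, hn0, le_sup_left⟩, ?_, ?_⟩
    · rintro x ⟨m, hm, n, hn, hx⟩ y - hyx
      exact ⟨m, hm, n, hn, hyx.trans hx⟩
    · rintro x ⟨m, hm, n, hn, hx⟩ y ⟨m', hm', n', hn', hy⟩
      refine ⟨m ⊔ m', hMjoin _ hm _ hm', n ⊔ n', hNjoin _ hn _ hn', ?_⟩
      calc x ⊔ y ≤ (m ⊔ n) ⊔ (m' ⊔ n') := sup_le_sup hx hy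
        _ = (m ⊔ m') ⊔ (n ⊔ n') := sup_sup_sup_comm _ _ _ _
  have hNsub : N ⊆ N0 := fun n hn => ⟨m0, hm0, n, hn, le_sup_right⟩
  have hMsub : M ⊆ N0 := fun m hm => ⟨m, hm, n0, hn0, le_sup_left⟩
  -- key: N0 ∩ B ⊆ M
  have hN0B : N0 ∩ B ⊆ M := by
    rintro b ⟨⟨m, hm, n, hn, hb⟩, hbB⟩
    have hmB : m ∈ B := hMB hm
    have h1 : b ⊓ mᶜ ∈ B := hmeet _ hbB _ (hcompl _ hmB)
    have h1n : b ⊓ mᶜ ∈ N := by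
      refine hNdown _ hn _ trivial ?_
      calc b ⊓ mᶜ ≤ (m ⊔ n) ⊓ mᶜ := inf_le_inf_right _ hb
        _ = (m ⊓ mᶜ) ⊔ (n ⊓ mᶜ) := inf_sup_right _ _ _
        _ = n ⊓ mᶜ := by rw [inf_compl_eq_bot, bot_sup_eq]
        _ ≤ n := inf_le_left
    have h1M : b ⊓ mᶜ ∈ M := hNB ⟨h1n, h1⟩
    have h2M : b ⊓ m ∈ M := hMdown _ hm _ (hmeet _ hbB _ hmB) inf_le_right
    have h3M : (b ⊓ m) ⊔ (b ⊓ mᶜ) ∈ M := hMjoin _ h2M _ h1M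
    have hbeq : b = (b ⊓ m) ⊔ (b ⊓ mᶜ) := by
      rw [← inf_sup_left, sup_compl_eq_top, inf_top_eq]
    exact hMdown _ h3M b hbB hbeq.le
  have hN0Beq : N0 ∩ B = M :=
    subset_antisymm hN0B fun m hm => ⟨hMsub hm, hMB hm⟩
  by_cases hMmax : IsMaximalIdealIn B M
  · -- extend N0 to a maximal proper ideal of A by Zorn
    have htopN0 : ⊤ ∉ N0 := by
      intro h
      have : (⊤ : A) ∈ M := hN0B ⟨h, htop⟩
      apply hMmax.2.1
      refine subset_antisymm hMB fun b hb => hMdown _ this _ hb le_top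
    set S : Set (Set A) := {I | IsIdealIn Set.univ I ∧ ⊤ ∉ I ∧ N0 ⊆ I} with hSdef
    have hzorn : ∃ m, N0 ⊆ m ∧ Maximal (· ∈ S) m := by
      apply zorn_subset_nonempty S ?_ N0 ⟨hN0ideal, htopN0, Set.Subset.rfl⟩
      intro c hcS hchain hcne
      obtain ⟨I0, hI0⟩ := hcne
      refine ⟨⋃₀ c, ⟨⟨Set.subset_univ _, ?_, ?_, ?_⟩, ?_, ?_⟩, fun s hs => Set.subset_sUnion_of_mem hs⟩
      · obtain ⟨x, hx⟩ := (hcS hI0).1.2.1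
        exact ⟨x, I0, hI0, hx⟩
      · rintro x ⟨I, hI, hxI⟩ y - hyx
        exact ⟨I, hI, (hcS hI).1.2.2.1 _ hxI _ trivial hyx⟩
      · rintro x ⟨I, hI, hxI⟩ y ⟨J, hJ, hyJ⟩
        rcases hchain.total hI hJ with h | h
        · exact ⟨J, hJ, (hcS hJ).1.2.2.2 _ (h hxI) _ hyJ⟩
        · exact ⟨I, hI, (hcS hI).1.2.2.2 _ hxI _ (h hyJ)⟩
      · rintro ⟨I, hI, htopI⟩
        exact (hcS hI).2.1 htopI
      · exact (hcS hI0).2.2.trans (Set.subset_sUnion_of_mem hI0)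
    obtain ⟨N', hN0N', hN'max⟩ := hzorn
    obtain ⟨⟨hN'ideal, htopN', -⟩, hN'maximal⟩ := hN'max
    have hN'univ : N' ≠ Set.univ := fun h => htopN' (h ▸ Set.mem_univ ⊤)
    -- N' ∩ B is a proper ideal of B containing M, hence equals M
    have hNB' : N' ∩ B = M := by
      have hMsub' : M ⊆ N' ∩ B := fun m hm => ⟨hN0N' (hMsub hm), hMB hm⟩
      have hideal : IsIdealIn B (N' ∩ B) := by
        refine ⟨Set.inter_subset_right, ⟨m0, hMsub' hm0⟩, ?_, ?_⟩
        · rintro x ⟨hxN', hxB⟩ y hyB hyx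
          exact ⟨hN'ideal.2.2.1 _ hxN' _ trivial hyx, hyB⟩
        · rintro x ⟨hxN', hxB⟩ y ⟨hyN', hyB⟩
          exact ⟨hN'ideal.2.2.2 _ hxN' _ hyN', hjoin _ hxB _ hyB⟩
      have hproper : N' ∩ B ≠ B := by
        intro h
        exact htopN' (h.symm ▸ htop : (⊤ : A) ∈ N' ∩ B).1
      exact hMmax.2.2 _ hideal hMsub' hproper
    refine ⟨N', hN'ideal, hNsub.trans hN0N', hNB', fun _ => ⟨hN'ideal, hN'univ, ?_⟩⟩
    intro M' hM' hsub hne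
    have : M' ∈ S := by
      refine ⟨hM', fun htopM' => hne ?_, hN0N'.trans hsub⟩
      exact Set.eq_univ_of_forall fun x => hM'.2.2.1 _ htopM' _ trivial le_top
    exact subset_antisymm (hN'maximal this hsub) hsub
  · exact ⟨N0, hN0ideal, hNsub, hN0Beq, fun h => absurd h hMmax⟩
end
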